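/- arXiv:1001.2494 — 4 statements merged into one kernel-verified Lean document; each statement's English description precedes it below -/
import Mathlib

section
/- If f : X → Y is a perfect map between paracompact Hausdorff spaces and X is submetrizable (admits a continuous metric), then the Δ-dimension of f is at most countable, i.e., dim_Δ(f) ≤ ℵ₀. -/
open unitInterval

/-- `CovDimLE X n` : the covering dimension of `X` is at most `n`; every finite
open cover has a finite open refinement of order at most `n + 1`. -/
def CovDimLE (X : Type) [TopologicalSpace X] (n : ℕ) : Prop :=
  ∀ 𝒰 : Set (Set X), 𝒰.Finite → (∀ U ∈ 𝒰, IsOpen U) → ⋃₀ 𝒰 = Set.univ →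
    ∃ 𝒱 : Set (Set X), 𝒱.Finite ∧ (∀ V ∈ 𝒱, IsOpen V) ∧ ⋃₀ 𝒱 = Set.univ ∧
      (∀ V ∈ 𝒱, ∃ U ∈ 𝒰, V ⊆ U) ∧ ∀ x : X, Set.ncard {V ∈ 𝒱 | x ∈ V} ≤ n + 1

/-- A map is light if all of its fibers are zero-dimensional. -/
def IsLightMap {X Y : Type} [TopologicalSpace X] [TopologicalSpace Y] (f : X → Y) : Prop :=
  ∀ y : Y, CovDimLE ↥(f ⁻¹' {y}) 0

/-- A map is perfect if it is closed and all of its fibers are compact. -/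
def IsPerfectMap {X Y : Type} [TopologicalSpace X] [TopologicalSpace Y] (f : X → Y) : Prop :=
  IsClosedMap f ∧ ∀ y : Y, IsCompact (f ⁻¹' {y})

/-- The Δ-dimension of a continuous map `f : X → Y` : the smallest cardinal `τ`
for which there is a continuous map `g : X → [0,1]^τ` such that the diagonal
product `f Δ g` is a light map. -/
noncomputable def deltaDim {X Y : Type} [TopologicalSpace X] [TopologicalSpace Y]
    (f : C(X, Y)) : Cardinal :=
  sInf {τ : Cardinal | ∃ (ι : Type) (g : C(X, ι → I)),
    Cardinal.mk ι = τ ∧ IsLightMap (fun x => (f x, g x))}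

/-- A space is submetrizable if it admits a continuous injection into a metrizable space. -/
def Submetrizable (X : Type) [TopologicalSpace X] : Prop :=
  ∃ (M : Type) (_ : MetricSpace M) (h : X → M), Continuous h ∧ Function.Injective h

/-!
Let `h : X → M` be a continuous injection into a metric space. It suffices to find countably many
maps `X → [0,1]` that separate the points of each fibre of `f`: then `f Δ g` is injective.
Fix a scale `ε`. As `f` is perfect, each `y` has a neighbourhood `W y` whose preimage is covered by
finitely many `h`-preimages of `ε`-balls. A partition of unity on the paracompact space `Y`
subordinate to `W` can be made σ-discrete; within one discrete family the supports do not meet, so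
the truncated distances to the centres of the balls glue into countably many continuous maps.
Points of a fibre on which they agree are `2ε`-close under `h`, and `ε → 0` finishes the proof.
-/

open Set Function Metric Topology

lemma covDimLE_zero_of_subsingleton (Z : Type) [TopologicalSpace Z] [Subsingleton Z] :
    CovDimLE Z 0 := by
  intro 𝒰 h𝒰 hopen hcov
  -- In a subsingleton space, any member of a cover containing a point is the whole space.
  refine ⟨{U ∈ 𝒰 | U = univ}, h𝒰.subset (sep_subset _ _), fun U hU => hopen U hU.1, ?_,
    fun U hU => ⟨U, hU.1, subset_rfl⟩, fun z => ?_⟩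
  · refine eq_univ_of_forall fun z => ?_
    obtain ⟨U, hU, hzU⟩ := hcov ▸ mem_univ z
    exact ⟨U, ⟨hU, eq_univ_of_forall fun z' => Subsingleton.elim z z' ▸ hzU⟩, hzU⟩
  · calc {V ∈ {U ∈ 𝒰 | U = univ} | z ∈ V}.ncard ≤ ({univ} : Set (Set Z)).ncard :=
          ncard_le_ncard (fun V hV => hV.1.2) (finite_singleton _)
      _ = 0 + 1 := ncard_singleton _

lemma isLightMap_of_injective {X Z : Type} [TopologicalSpace X] [TopologicalSpace Z]
    {F : X → Z} (hF : Injective F) : IsLightMap F := fun z =>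
  have : Subsingleton (F ⁻¹' {z}) := (subsingleton_singleton.preimage hF).coe_sort
  covDimLE_zero_of_subsingleton _

def IsDiscreteFamily {ι Y : Type*} [TopologicalSpace Y] (s : ι → Set Y) : Prop :=
  ∀ y, ∃ N ∈ 𝓝 y, {i | (s i ∩ N).Nonempty}.Subsingleton

namespace IsDiscreteFamily

variable {ι Y : Type*} [TopologicalSpace Y] {s t : ι → Set Y}

lemma mono (ht : IsDiscreteFamily t) (hst : ∀ i, s i ⊆ t i) : IsDiscreteFamily s := fun y =>
  let ⟨N, hN, hsub⟩ := ht y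
  ⟨N, hN, hsub.anti fun _ ⟨z, hzs, hzN⟩ => ⟨z, hst _ hzs, hzN⟩⟩

lemma locallyFinite (hs : IsDiscreteFamily s) : LocallyFinite s := fun y =>
  let ⟨N, hN, hsub⟩ := hs y
  ⟨N, hN, hsub.finite⟩

lemma subsingleton_setOf_mem (hs : IsDiscreteFamily s) (y : Y) : {i | y ∈ s i}.Subsingleton :=
  let ⟨_, hN, hsub⟩ := hs y
  hsub.anti fun _ hi => ⟨y, hi, mem_of_mem_nhds hN⟩

end IsDiscreteFamily

lemma IsPerfectMap.exists_isOpen_preimage_subset_iUnion_nat {X Y κ : Type} [TopologicalSpace X]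
    [TopologicalSpace Y] [Nonempty κ] {f : X → Y} (hf : IsPerfectMap f) {V : κ → Set X}
    (hV : ∀ k, IsOpen (V k)) (hcov : ⋃ k, V k = univ) (y : Y) :
    ∃ W, IsOpen W ∧ y ∈ W ∧ ∃ t : ℕ → κ, f ⁻¹' W ⊆ ⋃ n, V (t n) := by
  obtain ⟨T, hT⟩ := (hf.2 y).elim_finite_subcover V hV (hcov ▸ subset_univ _)
  obtain ⟨t, ht⟩ := countable_iff_exists_subset_range.1 T.countable_toSet
  have hfiber : f ⁻¹' {y} ⊆ ⋃ n, V (t n) := hT.trans <| iUnion₂_subset fun k hk =>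
    let ⟨n, hn⟩ := ht hk
    hn ▸ subset_iUnion (V ∘ t) n
  have hnear : ∀ᶠ y' in 𝓝 y, ∀ x ∈ f ⁻¹' {y'}, x ∈ ⋃ n, V (t n) :=
    hf.1.eventually_nhds_fiber y fun x hx =>
      (isOpen_iUnion fun n => hV (t n)).mem_nhds (hfiber hx)
  obtain ⟨W, hWsub, hWo, hyW⟩ := mem_nhds_iff.1 hnear
  exact ⟨W, hWo, hyW, t, fun x hx => hWsub hx x rfl⟩

namespace PartitionOfUnity

variable {ι Y : Type*} [TopologicalSpace Y] [LinearOrder ι] (ψ : PartitionOfUnity ι Y univ)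

/-- Stone's σ-discrete refinement of the cover by the supports of `ψ`, at level `c`. -/
def leadSet (c : ℝ) (i : ι) : Set Y :=
  {y | c < ψ i y} \ ⋃ j : Iio i, {y | c / 2 ≤ ψ j y}

lemma isOpen_leadSet {c : ℝ} (hc : 0 < c) (i : ι) : IsOpen (ψ.leadSet c i) := by
  have hlf : LocallyFinite fun j => {y | c / 2 ≤ ψ j y} :=
    ψ.locallyFinite.subset fun j y hy => ((half_pos hc).trans_le hy).ne'
  exact (isOpen_lt continuous_const (ψ i).continuous).sdiff <|
    (hlf.comp_injective Subtype.val_injective).isClosed_iUnion fun j =>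
      isClosed_le continuous_const (ψ j).continuous

lemma leadSet_subset_support {c : ℝ} (hc : 0 ≤ c) (i : ι) : ψ.leadSet c i ⊆ support (ψ i) :=
  fun _ hy => (hc.trans_lt hy.1).ne'

lemma exists_mem_leadSet [WellFoundedLT ι] (y : Y) :
    ∃ m : ℕ, ∃ i, y ∈ ψ.leadSet (1 / (m + 1)) i := by
  obtain ⟨i, hi, hmin⟩ := wellFounded_lt.has_min {i | 0 < ψ i y} (ψ.exists_pos (mem_univ y))
  obtain ⟨m, hm⟩ := exists_nat_one_div_lt (show 0 < ψ i y from hi)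
  refine ⟨m, i, hm, ?_⟩
  simp only [mem_iUnion, mem_ofPred_eq, not_exists]
  exact fun j hle => hmin j ((by positivity : (0 : ℝ) < 1 / (m + 1) / 2).trans_le hle) j.2

lemma isDiscreteFamily_leadSet {c : ℝ} (hc : 0 < c) : IsDiscreteFamily (ψ.leadSet c) := by
  intro y
  obtain ⟨N₀, hN₀, hfin⟩ := ψ.locallyFinite y
  set N := N₀ ∩ {z | ∀ j ∈ hfin.toFinset, dist (ψ j z) (ψ j y) < c / 4}
  have hN : N ∈ 𝓝 y := Filter.inter_mem hN₀ <| (Filter.eventually_all_finset _).2 fun j _ =>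
    ((ψ j).continuous.tendsto y).eventually (ball_mem_nhds _ (by positivity))
  -- An index `i` with `ψ i > c` somewhere in `N` has `ψ i > c / 2` on all of `N`, which
  -- keeps every later `leadSet c j` away from `N`.
  have hlt : ∀ i j, i < j → (ψ.leadSet c i ∩ N).Nonempty → (ψ.leadSet c j ∩ N).Nonempty →
      False := by
    rintro i j hij ⟨p, hpi, hpN⟩ ⟨q, hqj, hqN⟩
    have hiF : i ∈ hfin.toFinset :=
      (Finite.mem_toFinset _).2 ⟨p, (hc.trans hpi.1).ne', hpN.1⟩
    have hqi : ψ i q < c / 2 := by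
      by_contra hle
      exact hqj.2 (mem_iUnion.2 ⟨⟨i, hij⟩, not_lt.1 hle⟩)
    have hpc : c < ψ i p := hpi.1
    have hp := hpN.2 i hiF
    have hq := hqN.2 i hiF
    rw [Real.dist_eq, abs_lt] at hp hq
    linarith [hp.2, hq.1]
  refine ⟨N, hN, fun i hi j hj => ?_⟩
  rcases lt_trichotomy i j with h | h | h
  exacts [(hlt i j h hi hj).elim, h, (hlt j i h hj hi).elim]

end PartitionOfUnity

theorem exists_sigmaDiscrete_partitionOfUnity {ι Y : Type*} [TopologicalSpace Y] [T2Space Y]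
    [ParacompactSpace Y] (U : ι → Set Y) (hUo : ∀ i, IsOpen (U i)) (hU : ⋃ i, U i = univ) :
    ∃ ρ : PartitionOfUnity (ℕ × ι) Y univ, ρ.IsSubordinate (fun p => U p.2) ∧
      ∀ m, IsDiscreteFamily fun i => support (ρ (m, i)) := by
  obtain ⟨ψ, hψ⟩ := PartitionOfUnity.exists_isSubordinate isClosed_univ U hUo hU.ge
  obtain ⟨_, _⟩ := exists_wellFoundedLT ι
  have hc : ∀ m : ℕ, (0 : ℝ) < 1 / (m + 1) := fun m => by positivity
  set W : ℕ × ι → Set Y := fun p => ψ.leadSet (1 / (p.1 + 1)) p.2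
  have hWcov : univ ⊆ ⋃ p, W p := fun y _ =>
    let ⟨m, i, hy⟩ := ψ.exists_mem_leadSet y
    mem_iUnion.2 ⟨(m, i), hy⟩
  obtain ⟨ρ, hρ⟩ := PartitionOfUnity.exists_isSubordinate isClosed_univ W
    (fun p => ψ.isOpen_leadSet (hc p.1) p.2) hWcov
  refine ⟨ρ, fun p => (hρ p).trans ?_, fun m => ?_⟩
  · exact (ψ.leadSet_subset_support (hc p.1).le p.2).trans <| (subset_tsupport _).trans (hψ p.2)
  · exact (ψ.isDiscreteFamily_leadSet (hc m)).mono fun i => (subset_tsupport _).trans (hρ (m, i))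

lemma continuous_finsum_comp_mul {ι X Y : Type*} [TopologicalSpace X] [TopologicalSpace Y]
    {ψ : ι → Y → ℝ} (hψ : ∀ i, Continuous (ψ i)) (hlf : LocallyFinite fun i => support (ψ i))
    {f : X → Y} (hf : Continuous f) {φ : ι → X → ℝ} (hφ : ∀ i, Continuous (φ i)) :
    Continuous fun x => ∑ᶠ i, ψ i (f x) * φ i x :=
  continuous_finsum (fun i => ((hψ i).comp hf).mul (hφ i))
    ((hlf.preimage_continuous hf).subset fun _ => support_mul_subset_left _ _)

lemma finsum_mul_eq_of_subsingleton {ι R : Type*} [NonUnitalNonAssocSemiring R] {a b : ι → R}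
    (ha : {i | a i ≠ 0}.Subsingleton) {i : ι} (hi : a i ≠ 0) :
    ∑ᶠ j, a j * b j = a i * b i :=
  finsum_eq_single _ i fun j hj => by
    by_cases haj : a j = 0
    · rw [haj, zero_mul]
    · exact (hj (ha haj hi)).elim

lemma finsum_mul_mem_unitInterval {ι : Type*} {a b : ι → ℝ} (ha : {i | a i ≠ 0}.Subsingleton)
    (haI : ∀ i, a i ∈ I) (hbI : ∀ i, b i ∈ I) : ∑ᶠ j, a j * b j ∈ I := by
  by_cases h : ∃ i, a i ≠ 0
  · obtain ⟨i, hi⟩ := h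
    rw [finsum_mul_eq_of_subsingleton ha hi]
    exact mul_mem (haI i) (hbI i)
  · simp only [not_exists, not_not] at h
    simp only [h, zero_mul, finsum_zero]
    exact zero_mem

theorem exists_continuous_separating_at_scale {X Y M : Type} [TopologicalSpace X]
    [TopologicalSpace Y] [T2Space Y] [ParacompactSpace Y] [Nonempty X] [PseudoMetricSpace M]
    {h : X → M} (hh : Continuous h) (f : C(X, Y)) (hf : IsPerfectMap f) {ε : ℝ} (hε : 0 < ε)
    (hε1 : ε ≤ 1) :
    ∃ g : ℕ × ℕ → C(X, I), ∀ x x', f x = f x' → (∀ q, g q x = g q x') →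
      dist (h x) (h x') < 2 * ε := by
  have hcov : ⋃ x, h ⁻¹' ball (h x) ε = univ :=
    iUnion_eq_univ_iff.2 fun x => ⟨x, mem_ball_self hε⟩
  choose W hWo hyW t ht using
    hf.exists_isOpen_preimage_subset_iUnion_nat (fun x => isOpen_ball.preimage hh) hcov
  obtain ⟨ρ, hρW, hρd⟩ := exists_sigmaDiscrete_partitionOfUnity W hWo
    (iUnion_eq_univ_iff.2 fun y => ⟨y, hyW y⟩)
  set φ : ℕ → Y → X → ℝ := fun k s x => min 1 (dist (h x) (h (t s k)))
  have hφI : ∀ k s x, φ k s x ∈ I := fun k s x =>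
    ⟨le_min zero_le_one dist_nonneg, min_le_left _ _⟩
  set Φ : ℕ × ℕ → X → ℝ := fun q x => ∑ᶠ s, ρ (q.1, s) (f x) * φ q.2 s x
  have hΦ : ∀ m k x s, ρ (m, s) (f x) ≠ 0 → Φ (m, k) x = ρ (m, s) (f x) * φ k s x :=
    fun m k x s => finsum_mul_eq_of_subsingleton ((hρd m).subsingleton_setOf_mem (f x))
  have hΦI : ∀ q x, Φ q x ∈ I := fun q x =>
    finsum_mul_mem_unitInterval ((hρd q.1).subsingleton_setOf_mem (f x))
      (fun s => ⟨ρ.nonneg _ _, ρ.le_one _ _⟩) fun s => hφI _ _ _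
  have hΦc : ∀ q, Continuous (Φ q) := fun q =>
    continuous_finsum_comp_mul (fun s => (ρ _).continuous) (hρd q.1).locallyFinite
      f.continuous fun s => continuous_const.min (hh.dist continuous_const)
  refine ⟨fun q => ⟨fun x => ⟨Φ q x, hΦI q x⟩, (hΦc q).subtype_mk _⟩, ?_⟩
  intro x x' hfx hg
  obtain ⟨⟨m, s⟩, hpos⟩ := ρ.exists_pos (mem_univ (f x))
  obtain ⟨k, hk⟩ := mem_iUnion.1 (ht s (hρW _ (subset_tsupport _ hpos.ne')))
  have hφ : φ k s x = φ k s x' := by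
    refine mul_left_cancel₀ hpos.ne' ?_
    rw [← hΦ m k x s hpos.ne', hfx, ← hΦ m k x' s (hfx ▸ hpos.ne')]
    exact congrArg Subtype.val (hg (m, k))
  have hk' : dist (h x') (h (t s k)) < ε := by
    have : φ k s x' < ε := hφ ▸ (min_le_right _ _).trans_lt hk
    exact (min_lt_iff.1 this).resolve_left hε1.not_gt
  calc dist (h x) (h x') ≤ dist (h x) (h (t s k)) + dist (h x') (h (t s k)) :=
        dist_triangle_right _ _ _
    _ < 2 * ε := by linarith [mem_ball.1 hk]

theorem exists_continuous_injective_prod_of_submetrizable {X Y : Type} [TopologicalSpace X]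
    [TopologicalSpace Y] [T2Space Y] [ParacompactSpace Y] (f : C(X, Y)) (hf : IsPerfectMap f)
    (hX : Submetrizable X) :
    ∃ g : C(X, ℕ × ℕ × ℕ → I), Injective fun x => (f x, g x) := by
  obtain ⟨M, _, h, hh, hinj⟩ := hX
  cases isEmpty_or_nonempty X
  · exact ⟨ContinuousMap.const X 0, injective_of_subsingleton _⟩
  choose g hg using fun n : ℕ => exists_continuous_separating_at_scale hh f hf
    (ε := 1 / (n + 1)) (by positivity) (by rw [div_le_one (by positivity)]; simp)
  refine ⟨⟨fun x q => g q.1 q.2 x, continuous_pi fun q => (g q.1 q.2).continuous⟩, ?_⟩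
  intro x x' hxx'
  simp only [Prod.mk.injEq] at hxx'
  refine hinj (eq_of_forall_dist_le fun δ hδ => ?_)
  obtain ⟨n, hn⟩ := exists_nat_one_div_lt (half_pos hδ)
  have := hg n x x' hxx'.1 fun q => congrFun hxx'.2 (n, q)
  linarith

theorem deltaDim_le_aleph0_of_submetrizable_general {X Y : Type} [TopologicalSpace X]
    [TopologicalSpace Y] [T2Space Y] [ParacompactSpace Y]
    (f : C(X, Y)) (hf : IsPerfectMap f) (hX : Submetrizable X) :
    deltaDim f ≤ Cardinal.aleph0 := by
  obtain ⟨g, hg⟩ := exists_continuous_injective_prod_of_submetrizable f hf hX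
  exact csInf_le' ⟨ℕ × ℕ × ℕ, g, Cardinal.mk_eq_aleph0 _, isLightMap_of_injective hg⟩

/-- The Δ-dimension of a perfect map between paracompact Hausdorff spaces with
submetrizable domain is at most countable. -/
theorem deltaDim_le_aleph0_of_submetrizable {X Y : Type} [TopologicalSpace X]
    [TopologicalSpace Y] [T2Space X] [T2Space Y] [ParacompactSpace X] [ParacompactSpace Y]
    (f : C(X, Y)) (hf : IsPerfectMap f) (hX : Submetrizable X) :
    deltaDim f ≤ Cardinal.aleph0 :=
  deltaDim_le_aleph0_of_submetrizable_general f hf hX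
end

section
/- For any perfect map f : X → Y between paracompact Tychonoff spaces X, Y, dim(f) ≤ dim_Δ(f), where dim(f) = sup over y of the covering dimension of f⁻¹(y). -/
open unitInterval

lemma covDimLE_of_subsingleton (X : Type) [TopologicalSpace X] [Subsingleton X] :
    CovDimLE X 0 := by
  intro 𝒰 hfin hop hcov
  rcases isEmpty_or_nonempty X with hX | ⟨⟨x₀⟩⟩
  · refine ⟨∅, Set.finite_empty, by simp, ?_, by simp, by simp⟩
    simp [Set.eq_empty_of_isEmpty (Set.univ : Set X)]
  · have hx₀ : x₀ ∈ ⋃₀ 𝒰 := hcov ▸ Set.mem_univ x₀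
    rcases hx₀ with ⟨U₀, hU₀, hxU₀⟩
    refine ⟨{U₀}, Set.finite_singleton _, by simpa using hop U₀ hU₀, ?_, ?_, ?_⟩
    · ext x; simp [Subsingleton.elim x x₀, hxU₀]
    · exact fun V hV => ⟨U₀, hU₀, by simp_all⟩
    · intro x
      exact le_trans (Set.ncard_le_ncard (Set.sep_subset _ _) (Set.finite_singleton _))
        (by simp)

lemma covDimLE_of_homeomorph {X Z : Type} [TopologicalSpace X] [TopologicalSpace Z]
    (e : X ≃ₜ Z) {m : ℕ} (h : CovDimLE X m) : CovDimLE Z m := by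
  intro 𝒰 hfin hop hcov
  obtain ⟨𝒱, h𝒱fin, h𝒱op, h𝒱cov, h𝒱ref, h𝒱ord⟩ :=
    h ((fun U => e ⁻¹' U) '' 𝒰) (hfin.image _)
      (by rintro _ ⟨U, hU, rfl⟩; exact (hop U hU).preimage e.continuous)
      (by
        ext x
        simp only [Set.mem_sUnion, Set.mem_univ, iff_true]
        have : e x ∈ ⋃₀ 𝒰 := hcov ▸ Set.mem_univ _
        rcases this with ⟨U, hU, hxU⟩
        exact ⟨e ⁻¹' U, ⟨U, hU, rfl⟩, hxU⟩)
  refine ⟨(fun V => e.symm ⁻¹' V) '' 𝒱, h𝒱fin.image _, ?_, ?_, ?_, ?_⟩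
  · rintro _ ⟨V, hV, rfl⟩; exact (h𝒱op V hV).preimage e.symm.continuous
  · ext z
    simp only [Set.mem_sUnion, Set.mem_univ, iff_true]
    have : e.symm z ∈ ⋃₀ 𝒱 := h𝒱cov ▸ Set.mem_univ _
    rcases this with ⟨V, hV, hzV⟩
    exact ⟨e.symm ⁻¹' V, ⟨V, hV, rfl⟩, hzV⟩
  · rintro _ ⟨V, hV, rfl⟩
    rcases h𝒱ref V hV with ⟨_, ⟨U, hU, rfl⟩, hVU⟩
    refine ⟨U, hU, fun z hz => ?_⟩
    have := hVU hz
    simpa using this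
  · intro z
    have hinj : Function.Injective (fun V : Set X => e.symm ⁻¹' V) := fun V W hVW => by
      have := congrArg (fun S => e.symm '' S) hVW
      simpa [Set.image_preimage_eq _ e.symm.surjective] using this
    have : {W ∈ (fun V => e.symm ⁻¹' V) '' 𝒱 | z ∈ W}
        = (fun V => e.symm ⁻¹' V) '' {V ∈ 𝒱 | e.symm z ∈ V} := by
      ext W
      constructor
      · rintro ⟨⟨V, hV, rfl⟩, hzW⟩; exact ⟨V, ⟨hV, hzW⟩, rfl⟩
      · rintro ⟨V, ⟨hV, hzV⟩, rfl⟩; exact ⟨⟨V, hV, rfl⟩, hzV⟩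
    rw [this, Set.ncard_image_of_injective _ hinj]
    exact h𝒱ord _

lemma exists_disjoint_opens {W : Type} [TopologicalSpace W] [T2Space W]
    (𝒦 : Set (Set W)) (hfin : 𝒦.Finite) (hcpt : ∀ K ∈ 𝒦, IsCompact K)
    (hdisj : ∀ K ∈ 𝒦, ∀ L ∈ 𝒦, K ≠ L → Disjoint K L) :
    ∃ O : Set W → Set W, (∀ K ∈ 𝒦, IsOpen (O K) ∧ K ⊆ O K) ∧
      ∀ K ∈ 𝒦, ∀ L ∈ 𝒦, K ≠ L → Disjoint (O K) (O L) := by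
  classical
  -- for each ordered pair choose separating opens
  have key : ∀ K L : Set W, ∃ UV : Set W × Set W,
      (K ∈ 𝒦 → L ∈ 𝒦 → K ≠ L → IsOpen UV.1 ∧ IsOpen UV.2 ∧ K ⊆ UV.1 ∧ L ⊆ UV.2 ∧
        Disjoint UV.1 UV.2) := by
    intro K L
    by_cases h : K ∈ 𝒦 ∧ L ∈ 𝒦 ∧ K ≠ L
    · obtain ⟨U, V, hU, hV, hKU, hLV, hUV⟩ :=
        SeparatedNhds.of_isCompact_isCompact (hcpt K h.1) (hcpt L h.2.1)
          (hdisj K h.1 L h.2.1 h.2.2)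
      exact ⟨(U, V), fun _ _ _ => ⟨hU, hV, hKU, hLV, hUV⟩⟩
    · exact ⟨(∅, ∅), fun h1 h2 h3 => absurd ⟨h1, h2, h3⟩ h⟩
  choose UV hUV using key
  refine ⟨fun K => ⋂ L ∈ 𝒦 \ {K}, ((UV K L).1 ∩ (UV L K).2), ?_, ?_⟩
  · intro K hK
    constructor
    · refine Set.Finite.isOpen_biInter (hfin.subset Set.diff_subset) ?_
      intro L hL
      obtain ⟨h1, h2, -⟩ := hUV K L hK hL.1 (fun h => hL.2 (by simp [h]))
      obtain ⟨h1', h2', -⟩ := hUV L K hL.1 hK (fun h => hL.2 (by simp [h]))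
      exact h1.inter h2'
    · intro x hx
      refine Set.mem_iInter₂.2 fun L hL => ?_
      have hne : K ≠ L := fun h => hL.2 (by simp [h])
      obtain ⟨-, -, hKU, -, -⟩ := hUV K L hK hL.1 hne
      obtain ⟨-, -, -, hKV, -⟩ := hUV L K hL.1 hK hne.symm
      exact ⟨hKU hx, hKV hx⟩
  · intro K hK L hL hne
    have h1 : (⋂ M ∈ 𝒦 \ {K}, ((UV K M).1 ∩ (UV M K).2)) ⊆ (UV K L).1 := by
      intro x hx
      exact (Set.mem_iInter₂.1 hx L ⟨hL, fun h => hne (by simpa using h.symm)⟩).1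
    have h2 : (⋂ M ∈ 𝒦 \ {L}, ((UV L M).1 ∩ (UV M L).2)) ⊆ (UV K L).2 := by
      intro x hx
      exact (Set.mem_iInter₂.1 hx K ⟨hK, fun h => hne (by simpa using h)⟩).2
    obtain ⟨-, -, -, -, hd⟩ := hUV K L hK hL hne
    exact hd.mono h1 h2

lemma zero_dim_decomposition {W : Type} [TopologicalSpace W] [T2Space W]
    {A : Set W} (hA : IsCompact A) (h0 : CovDimLE ↥A 0)
    (𝒰 : Set (Set W)) (hfin : 𝒰.Finite) (hop : ∀ U ∈ 𝒰, IsOpen U) (hcov : A ⊆ ⋃₀ 𝒰) :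
    ∃ 𝒟 : Set (Set W), 𝒟.Finite ∧ (∀ D ∈ 𝒟, IsOpen D) ∧ A ⊆ ⋃₀ 𝒟 ∧
      (∀ D ∈ 𝒟, ∃ U ∈ 𝒰, D ⊆ U) ∧
      (∀ D ∈ 𝒟, ∀ D' ∈ 𝒟, D ≠ D' → Disjoint D D') := by
  classical
  have hCS : CompactSpace ↥A := isCompact_iff_compactSpace.mp hA
  obtain ⟨𝒱, h𝒱fin, h𝒱op, h𝒱cov, h𝒱ref, h𝒱ord⟩ :=
    h0 ((fun U => (Subtype.val : ↥A → W) ⁻¹' U) '' 𝒰) (hfin.image _)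
      (by rintro _ ⟨U, hU, rfl⟩; exact (hop U hU).preimage continuous_subtype_val)
      (by
        ext z
        simp only [Set.mem_sUnion, Set.mem_univ, iff_true]
        rcases hcov z.2 with ⟨U, hU, hzU⟩
        exact ⟨_, ⟨U, hU, rfl⟩, hzU⟩)
  -- distinct members of 𝒱 are disjoint
  have hdisjV : ∀ V ∈ 𝒱, ∀ V' ∈ 𝒱, V ≠ V' → Disjoint V V' := by
    intro V hV V' hV' hne
    rw [Set.disjoint_left]
    intro z hzV hzV'
    have hsub : {V'' ∈ 𝒱 | z ∈ V''}.Finite := h𝒱fin.subset (Set.sep_subset _ _)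
    have := (Set.ncard_le_one hsub).1 (h𝒱ord z) V ⟨hV, hzV⟩ V' ⟨hV', hzV'⟩
    exact hne this
  -- each member of 𝒱 is closed, hence compact
  have hVcpt : ∀ V ∈ 𝒱, IsCompact V := by
    intro V hV
    have hcl : IsClosed V := by
      rw [← isOpen_compl_iff]
      have : Vᶜ = ⋃₀ (𝒱 \ {V}) := by
        ext z
        constructor
        · intro hz
          have : z ∈ ⋃₀ 𝒱 := h𝒱cov ▸ Set.mem_univ z
          rcases this with ⟨V', hV', hzV'⟩
          exact ⟨V', ⟨hV', fun h => hz ((Set.mem_singleton_iff.1 h) ▸ hzV')⟩, hzV'⟩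
        · rintro ⟨V', ⟨hV', hne⟩, hzV'⟩ hzV
          exact ((Set.disjoint_left.1 (hdisjV V hV V' hV'
            (fun h => hne (by simp [h])))) hzV) hzV'
      rw [this]
      exact isOpen_sUnion fun V' hV' => h𝒱op V' hV'.1
    exact hcl.isCompact
  -- push to compact subsets of W and separate
  set img : Set ↥A → Set W := fun V => Subtype.val '' V with himg
  have himg_inj : Function.Injective img :=
    Set.image_injective.2 Subtype.val_injective
  obtain ⟨O, hO1, hO2⟩ := exists_disjoint_opens (img '' 𝒱) (h𝒱fin.image _)
    (by rintro _ ⟨V, hV, rfl⟩; exact ((hVcpt V hV).image continuous_subtype_val))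
    (by
      rintro _ ⟨V, hV, rfl⟩ _ ⟨V', hV', rfl⟩ hne
      have hVne : V ≠ V' := fun h => hne (by rw [h])
      exact Set.disjoint_image_of_injective Subtype.val_injective
        (hdisjV V hV V' hV' hVne))
  -- choose a refinement target for each V
  have hch : ∀ V : Set ↥A, ∃ U : Set W, V ∈ 𝒱 → U ∈ 𝒰 ∧ V ⊆ Subtype.val ⁻¹' U := by
    intro V
    by_cases hV : V ∈ 𝒱
    · rcases h𝒱ref V hV with ⟨_, ⟨U, hU, rfl⟩, hVU⟩
      exact ⟨U, fun _ => ⟨hU, hVU⟩⟩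
    · exact ⟨∅, fun h => absurd h hV⟩
  choose cU hcU using hch
  refine ⟨(fun V => O (img V) ∩ cU V) '' 𝒱, h𝒱fin.image _, ?_, ?_, ?_, ?_⟩
  · rintro _ ⟨V, hV, rfl⟩
    exact ((hO1 _ ⟨V, hV, rfl⟩).1).inter (hop _ ((hcU V hV).1))
  · intro a ha
    have : (⟨a, ha⟩ : ↥A) ∈ ⋃₀ 𝒱 := h𝒱cov ▸ Set.mem_univ _
    rcases this with ⟨V, hV, hzV⟩
    refine ⟨O (img V) ∩ cU V, ⟨V, hV, rfl⟩, ?_, ?_⟩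
    · exact (hO1 _ ⟨V, hV, rfl⟩).2 ⟨⟨a, ha⟩, hzV, rfl⟩
    · exact (hcU V hV).2 hzV
  · rintro _ ⟨V, hV, rfl⟩
    exact ⟨cU V, (hcU V hV).1, Set.inter_subset_right⟩
  · rintro _ ⟨V, hV, rfl⟩ _ ⟨V', hV', rfl⟩ hne
    have hVne : V ≠ V' := fun h => hne (by rw [h])
    have := hO2 (img V) ⟨V, hV, rfl⟩ (img V') ⟨V', hV', rfl⟩
      (fun h => hVne (himg_inj h))
    exact (this.mono Set.inter_subset_left Set.inter_subset_left)

lemma cube_covDimLE {ι : Type} [Fintype ι] : CovDimLE (ι → I) (Fintype.card ι) := by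
  classical
  intro 𝒰 hfin hop hcov
  -- Lebesgue number
  obtain ⟨δ, hδ, hball⟩ := lebesgue_number_lemma_of_metric_sUnion
    (isCompact_univ : IsCompact (Set.univ : Set (ι → I))) hop (by rw [hcov])
  obtain ⟨m, hm⟩ := exists_nat_gt (4 / δ)
  have hm0 : (0 : ℝ) < m := lt_trans (div_pos four_pos hδ) hm
  have h2m : 2 / (m : ℝ) < δ := by
    rw [div_lt_iff₀ hm0]
    have := (div_lt_iff₀ hδ).1 hm
    nlinarith
  -- the scaled coordinates
  set y : (ι → I) → ι → ℝ := fun x i => m * (x i : ℝ) with hy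
  have hycont : ∀ i, Continuous fun x : ι → I => y x i := fun i =>
    continuous_const.mul (continuous_subtype_val.comp (continuous_apply i))
  -- Freudenthal star sets
  set Vv : (ι → ℤ) → Set (ι → I) := fun v =>
    {x | (∀ i, |y x i - v i| < 1) ∧ ∀ i j, (y x i - v i) - (y x j - v j) < 1} with hVv
  set S : Set (ι → ℤ) := {v | ∀ i, 0 ≤ v i ∧ v i ≤ (m : ℤ)} with hS
  have hSfin : S.Finite := by
    have : S ⊆ Set.pi Set.univ (fun _ : ι => Set.Icc (0 : ℤ) m) := by
      intro v hv i _
      exact ⟨(hv i).1, (hv i).2⟩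
    exact (Set.Finite.pi fun _ => Set.finite_Icc _ _).subset this
  set 𝒱 : Set (Set (ι → I)) := Vv '' {v ∈ S | (Vv v).Nonempty} with h𝒱
  have hVvopen : ∀ v, IsOpen (Vv v) := by
    intro v
    have h1 : IsOpen {x : ι → I | ∀ i, |y x i - v i| < 1} := by
      rw [Set.setOf_forall]
      refine isOpen_iInter_of_finite fun i => ?_
      exact isOpen_lt (((hycont i).sub continuous_const).abs) continuous_const
    have h2 : IsOpen {x : ι → I | ∀ i j, (y x i - v i) - (y x j - v j) < 1} := by
      rw [Set.setOf_forall]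
      refine isOpen_iInter_of_finite fun i => ?_
      rw [Set.setOf_forall]
      refine isOpen_iInter_of_finite fun j => ?_
      exact isOpen_lt (((hycont i).sub continuous_const).sub
        ((hycont j).sub continuous_const)) continuous_const
    have : Vv v = {x : ι → I | ∀ i, |y x i - v i| < 1} ∩
        {x : ι → I | ∀ i j, (y x i - v i) - (y x j - v j) < 1} := rfl
    rw [this]
    exact h1.inter h2
  have h𝒱fin : 𝒱.Finite := (hSfin.subset (Set.sep_subset _ _)).image _
  -- membership facts
  have hmem : ∀ (v : ι → ℤ) (x : ι → I), x ∈ Vv v ↔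
      ((∀ i, |y x i - v i| < 1) ∧ ∀ i j, (y x i - v i) - (y x j - v j) < 1) := by
    intro v x; rfl
  -- every point lies in the star of its floor vertex
  have hfloor : ∀ x : ι → I, x ∈ Vv (fun i => ⌊y x i⌋) ∧ (fun i => ⌊y x i⌋) ∈ S := by
    intro x
    refine ⟨(hmem _ _).2 ⟨fun i => ?_, fun i j => ?_⟩, fun i => ⟨?_, ?_⟩⟩
    · rw [Int.self_sub_floor, abs_lt]
      exact ⟨by linarith [Int.fract_nonneg (y x i)], Int.fract_lt_one _⟩
    · rw [Int.self_sub_floor, Int.self_sub_floor]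
      linarith [Int.fract_nonneg (y x j), Int.fract_lt_one (y x i)]
    · exact Int.floor_nonneg.2 (mul_nonneg hm0.le (x i).2.1)
    · have hle : y x i ≤ (m : ℝ) := by
        have h1 := (x i).2.2
        have h0 := (x i).2.1
        simp only [hy]
        nlinarith
      calc ⌊y x i⌋ ≤ ⌊(m : ℝ)⌋ := Int.floor_le_floor hle
        _ = (m : ℤ) := by exact_mod_cast Int.floor_natCast m
  have hcover : ⋃₀ 𝒱 = Set.univ := by
    ext x
    simp only [Set.mem_univ, iff_true, Set.mem_sUnion]
    exact ⟨Vv (fun i => ⌊y x i⌋), ⟨_, ⟨(hfloor x).2, ⟨x, (hfloor x).1⟩⟩, rfl⟩, (hfloor x).1⟩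
  have href : ∀ V ∈ 𝒱, ∃ U ∈ 𝒰, V ⊆ U := by
    rintro _ ⟨v, ⟨hvS, x₀, hx₀⟩, rfl⟩
    obtain ⟨U, hU, hsub⟩ := hball x₀ (Set.mem_univ _)
    refine ⟨U, hU, fun x hx => hsub ?_⟩
    rw [Metric.mem_ball, dist_pi_lt_iff hδ]
    intro i
    obtain ⟨hx1, -⟩ := (hmem v x).1 hx
    obtain ⟨hx₀1, -⟩ := (hmem v x₀).1 hx₀
    have h1 := hx1 i
    have h2 := hx₀1 i
    rw [abs_lt] at h1 h2
    have hyy : y x i - y x₀ i = (m : ℝ) * ((x i : ℝ) - (x₀ i : ℝ)) := by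
      simp only [hy]; ring
    have habs : (m : ℝ) * |(x i : ℝ) - (x₀ i : ℝ)| < 2 := by
      rw [← abs_of_pos hm0, ← abs_mul, ← hyy, abs_lt]
      constructor <;> linarith
    have : |(x i : ℝ) - (x₀ i : ℝ)| < 2 / m := by
      rw [lt_div_iff₀ hm0]; linarith [habs]
    calc dist (x i) (x₀ i) = |(x i : ℝ) - (x₀ i : ℝ)| := by
          rw [Subtype.dist_eq, Real.dist_eq]
      _ < 2 / m := this
      _ < δ := h2m
  refine ⟨𝒱, h𝒱fin, by rintro _ ⟨v, -, rfl⟩; exact hVvopen v, hcover, href, ?_⟩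
  -- the order bound
  intro x
  set A := {V ∈ 𝒱 | x ∈ V} with hA
  have hAfin : A.Finite := h𝒱fin.subset (Set.sep_subset _ _)
  have hrepex : ∀ V : Set (ι → I), ∃ v : ι → ℤ, V ∈ A → V = Vv v := by
    intro V
    by_cases hV : V ∈ A
    · rcases hV.1 with ⟨v, -, rfl⟩; exact ⟨v, fun _ => rfl⟩
    · exact ⟨0, fun h => absurd h hV⟩
  choose rep hrep using hrepex
  -- structure of vertices whose star contains x
  have hstruct : ∀ v : ι → ℤ, x ∈ Vv v → ∀ i,
      v i = ⌊y x i⌋ ∨ v i = ⌊y x i⌋ + 1 := by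
    intro v hxv i
    obtain ⟨h1', -⟩ := (hmem v x).1 hxv
    have h1 := h1' i
    rw [abs_lt] at h1
    have hfl : (⌊y x i⌋ : ℝ) ≤ y x i := Int.floor_le _
    have hfl2 : y x i < ⌊y x i⌋ + 1 := Int.lt_floor_add_one _
    have hge : ⌊y x i⌋ ≤ v i := by
      by_contra hlt
      push_neg at hlt
      have h3 : v i ≤ ⌊y x i⌋ - 1 := by omega
      have h4 : (v i : ℝ) ≤ (⌊y x i⌋ : ℝ) - 1 := by exact_mod_cast h3
      linarith
    have hle : v i ≤ ⌊y x i⌋ + 1 := by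
      by_contra hlt
      push_neg at hlt
      have h3 : ⌊y x i⌋ + 2 ≤ v i := by omega
      have h4 : (⌊y x i⌋ : ℝ) + 2 ≤ (v i : ℝ) := by exact_mod_cast h3
      linarith
    omega
  have hchain : ∀ v w : ι → ℤ, x ∈ Vv v → x ∈ Vv w → ∀ i j,
      v i = ⌊y x i⌋ + 1 → w i = ⌊y x i⌋ → w j = ⌊y x j⌋ + 1 → v j = ⌊y x j⌋ → False := by
    intro v w hxv hxw i j hvi hwi hwj hvj
    obtain ⟨-, h1'⟩ := (hmem v x).1 hxv
    obtain ⟨-, h2'⟩ := (hmem w x).1 hxw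
    have h1 := h1' j i
    have h2 := h2' i j
    rw [hvj, hvi] at h1
    rw [hwi, hwj] at h2
    push_cast at h1 h2
    linarith
  set φ : Set (ι → I) → Set ι := fun V => {i | rep V i = ⌊y x i⌋ + 1} with hφ
  have hxrep : ∀ V ∈ A, x ∈ Vv (rep V) := by
    intro V hV
    have := hrep V hV
    rw [← this]
    exact hV.2
  have hinj : Set.InjOn φ A := by
    intro V₁ hV₁ V₂ hV₂ heq
    have hreq : rep V₁ = rep V₂ := by
      funext i
      have h1 := hstruct _ (hxrep V₁ hV₁) i
      have h2 := hstruct _ (hxrep V₂ hV₂) i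
      have hiff : (i ∈ φ V₁) ↔ (i ∈ φ V₂) := by rw [heq]
      simp only [hφ, Set.mem_setOf_eq] at hiff
      omega
    rw [hrep V₁ hV₁, hrep V₂ hV₂, hreq]
  rw [← Set.ncard_image_of_injOn hinj]
  -- the image is a chain of subsets of ι
  have hchainT : ∀ B₁ ∈ φ '' A, ∀ B₂ ∈ φ '' A, B₁ ⊆ B₂ ∨ B₂ ⊆ B₁ := by
    rintro _ ⟨V₁, hV₁, rfl⟩ _ ⟨V₂, hV₂, rfl⟩
    by_contra hcon
    push_neg at hcon
    obtain ⟨h1c, h2c⟩ := hcon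
    obtain ⟨i, hi1, hi2⟩ := Set.not_subset.1 h1c
    obtain ⟨j, hj1, hj2⟩ := Set.not_subset.1 h2c
    simp only [hφ, Set.mem_setOf_eq] at hi1 hi2 hj1 hj2
    have hwi : rep V₂ i = ⌊y x i⌋ := by
      have := hstruct _ (hxrep V₂ hV₂) i; omega
    have hvj : rep V₁ j = ⌊y x j⌋ := by
      have := hstruct _ (hxrep V₁ hV₁) j; omega
    exact hchain (rep V₁) (rep V₂) (hxrep V₁ hV₁) (hxrep V₂ hV₂) i j hi1 hwi hj1 hvj
  have hcard : ∀ B ∈ φ '' A, B.ncard ≤ Fintype.card ι := by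
    intro B _
    calc B.ncard ≤ (Set.univ : Set ι).ncard :=
          Set.ncard_le_ncard (Set.subset_univ B) Set.finite_univ
      _ = Fintype.card ι := by rw [Set.ncard_univ, Nat.card_eq_fintype_card]
  refine le_trans (Set.ncard_le_ncard_of_injOn (t := ↑(Finset.Iic (Fintype.card ι))) Set.ncard
    (fun B hB => ?_) (fun B₁ hB₁ B₂ hB₂ hncard => ?_) (Finset.finite_toSet _))
    ?_
  · simp only [Finset.coe_Iic, Set.mem_Iic]
    exact hcard B hB
  · rcases hchainT B₁ hB₁ B₂ hB₂ with hsub | hsub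
    · exact Set.eq_of_subset_of_ncard_le hsub (le_of_eq hncard.symm) (Set.toFinite _)
    · exact (Set.eq_of_subset_of_ncard_le hsub (le_of_eq hncard) (Set.toFinite _)).symm
  · rw [Set.ncard_coe_finset, Nat.card_Iic]

lemma exists_light_finite {X Y : Type} [TopologicalSpace X] [TopologicalSpace Y]
    [T2Space X] [ParacompactSpace X] (f : C(X, Y)) (n : ℕ) (hΔ : deltaDim f ≤ n) :
    ∃ (ι : Type) (_ : Fintype ι) (g : C(X, ι → I)), Fintype.card ι ≤ n ∧
      IsLightMap (fun x => (f x, g x)) := by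
  classical
  set S : Set Cardinal := {τ : Cardinal | ∃ (ι : Type) (g : C(X, ι → I)),
    Cardinal.mk ι = τ ∧ IsLightMap (fun x => (f x, g x))} with hSdef
  have hSne : S.Nonempty := by
    refine ⟨Cardinal.mk C(X, I), C(X, I),
      ⟨fun x φ => φ x, continuous_pi fun φ => φ.continuous⟩, rfl, ?_⟩
    rintro ⟨y, t⟩
    have : Subsingleton ↥((fun x => (f x, fun φ : C(X, I) => φ x)) ⁻¹' {(y, t)}) := by
      constructor
      rintro ⟨a, ha⟩ ⟨b, hb⟩
      have ha' := Set.mem_singleton_iff.1 ha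
      have hb' := Set.mem_singleton_iff.1 hb
      have hab : ∀ φ : C(X, I), φ a = φ b := by
        intro φ
        have h1 : (fun φ : C(X, I) => φ a) = t := (Prod.ext_iff.1 ha').2
        have h2 : (fun φ : C(X, I) => φ b) = t := (Prod.ext_iff.1 hb').2
        rw [← h2] at h1
        exact congrFun h1 φ
      ext
      by_contra hne
      obtain ⟨F, hF0, hF1, hFmem⟩ := exists_continuous_zero_one_of_isClosed
        (isClosed_singleton (x := a)) (isClosed_singleton (x := b))
        (by simp [Set.disjoint_singleton, hne])
      have h0 : F a = 0 := by simpa using hF0 rfl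
      have h1 : F b = 1 := by simpa using hF1 rfl
      have hFab : F a = F b :=
        congrArg Subtype.val (hab ⟨fun x => ⟨F x, hFmem x⟩, F.continuous.subtype_mk _⟩)
      rw [h0, h1] at hFab
      norm_num at hFab
    exact covDimLE_of_subsingleton _
  have hmemS : sInf S ∈ S := csInf_mem hSne
  obtain ⟨ι, g, hmk, hlight⟩ := hmemS
  have hle : Cardinal.mk ι ≤ (n : Cardinal) := hmk ▸ hΔ
  have hfin : Finite ι := Cardinal.lt_aleph0_iff_finite.1
    (lt_of_le_of_lt hle (Cardinal.nat_lt_aleph0 n))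
  have : Fintype ι := Fintype.ofFinite ι
  refine ⟨ι, this, g, ?_, hlight⟩
  rw [Cardinal.mk_fintype] at hle
  exact_mod_cast hle


/-- `dim(f) ≤ dim_Δ(f)` : if the Δ-dimension of a perfect map `f` between paracompact
Hausdorff spaces is at most `n`, then every fiber of `f` has covering dimension at most
`n`. -/
theorem dim_le_deltaDim {X Y : Type} [TopologicalSpace X] [TopologicalSpace Y]
    [T2Space X] [T2Space Y] [ParacompactSpace X] [ParacompactSpace Y]
    (f : C(X, Y)) (hf : IsPerfectMap f) (n : ℕ) (hΔ : deltaDim f ≤ n) :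
    ∀ y : Y, CovDimLE ↥(f ⁻¹' {y}) n := by
  classical
  obtain ⟨ι, _inst, g, hcard, hlight⟩ := exists_light_finite f n hΔ
  intro y
  set F : Set X := f ⁻¹' {y} with hF
  have hFc : IsCompact F := hf.2 y
  have hCS : CompactSpace ↥F := isCompact_iff_compactSpace.mp hFc
  set h : ↥F → ι → I := fun z => g z.val with hh
  have hhcont : Continuous h := g.continuous.comp continuous_subtype_val
  intro 𝒰 hfin hop hcov
  -- zero-dimensionality of the fibers of h
  have hfib : ∀ t : ι → I, CovDimLE ↥(h ⁻¹' {t}) 0 := by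
    intro t
    have fwdF : ∀ p : ↥((fun x => (f x, g x)) ⁻¹' {(y, t)}), (p : X) ∈ F := by
      intro p
      have := (Prod.ext_iff.1 (Set.mem_singleton_iff.1 p.2)).1
      simpa [hF] using this
    have fwdt : ∀ p : ↥((fun x => (f x, g x)) ⁻¹' {(y, t)}),
        (⟨(p : X), fwdF p⟩ : ↥F) ∈ h ⁻¹' {t} := by
      intro p
      simp only [hh, Set.mem_preimage, Set.mem_singleton_iff]
      exact (Prod.ext_iff.1 (Set.mem_singleton_iff.1 p.2)).2
    have bwd : ∀ r : ↥(h ⁻¹' {t}), ((r : ↥F) : X) ∈ (fun x => (f x, g x)) ⁻¹' {(y, t)} := by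
      intro r
      simp only [Set.mem_preimage, Set.mem_singleton_iff, Prod.ext_iff]
      exact ⟨(r : ↥F).2, Set.mem_singleton_iff.1 r.2⟩
    exact covDimLE_of_homeomorph
      { toFun := fun p => ⟨⟨(p : X), fwdF p⟩, fwdt p⟩
        invFun := fun r => ⟨((r : ↥F) : X), bwd r⟩
        left_inv := fun p => rfl
        right_inv := fun r => rfl
        continuous_toFun := (continuous_subtype_val.subtype_mk _).subtype_mk _
        continuous_invFun := (continuous_subtype_val.comp continuous_subtype_val).subtype_mk _ }
      (hlight (y, t))
  -- for each point of the cube, a disjoint decomposition over a neighborhood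
  have key : ∀ t : ι → I, ∃ (O : Set (ι → I)) (𝒟 : Set (Set ↥F)),
      IsOpen O ∧ t ∈ O ∧ 𝒟.Finite ∧ (∀ D ∈ 𝒟, IsOpen D) ∧
      h ⁻¹' O ⊆ ⋃₀ 𝒟 ∧ (∀ D ∈ 𝒟, ∃ U ∈ 𝒰, D ⊆ U) ∧
      (∀ D ∈ 𝒟, ∀ D' ∈ 𝒟, D ≠ D' → Disjoint D D') := by
    intro t
    have hAcl : IsClosed (h ⁻¹' ({t} : Set (ι → I))) := isClosed_singleton.preimage hhcont
    obtain ⟨𝒟, h𝒟fin, h𝒟op, h𝒟cov, h𝒟ref, h𝒟disj⟩ :=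
      zero_dim_decomposition hAcl.isCompact (hfib t) 𝒰 hfin hop
        (by rw [hcov]; exact Set.subset_univ _)
    set K : Set ↥F := (⋃₀ 𝒟)ᶜ with hK
    have hKc : IsCompact K := (isOpen_sUnion h𝒟op).isClosed_compl.isCompact
    have himgc : IsClosed (h '' K) := (hKc.image hhcont).isClosed
    have htm : t ∉ h '' K := by
      rintro ⟨z, hzK, hzt⟩
      exact hzK (h𝒟cov (by simp [hzt]))
    refine ⟨(h '' K)ᶜ, 𝒟, himgc.isOpen_compl, htm, h𝒟fin, h𝒟op, ?_, h𝒟ref, h𝒟disj⟩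
    intro z hz
    by_contra hzn
    exact hz ⟨z, hzn, rfl⟩
  choose O 𝒟 hOopen hOmem h𝒟fin h𝒟op h𝒟cov h𝒟ref h𝒟disj using key
  have hOcov : (Set.univ : Set (ι → I)) ⊆ ⋃ t : ι → I, O t :=
    fun t _ => Set.mem_iUnion.2 ⟨t, hOmem t⟩
  obtain ⟨T, hT⟩ := isCompact_univ.elim_finite_subcover O hOopen hOcov
  obtain ⟨𝒲, h𝒲fin, h𝒲op, h𝒲cov, h𝒲ref, h𝒲ord⟩ := cube_covDimLE
    ((fun t => O t) '' ↑T) (T.finite_toSet.image _)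
    (by rintro _ ⟨t, -, rfl⟩; exact hOopen t)
    (by
      apply Set.eq_univ_of_univ_subset
      intro u hu
      obtain ⟨t, ht, htu⟩ := Set.mem_iUnion₂.1 (hT hu)
      exact ⟨O t, ⟨t, ht, rfl⟩, htu⟩)
  have hWt : ∀ W : Set (ι → I), ∃ t : ι → I, W ∈ 𝒲 → W ⊆ O t := by
    intro W
    by_cases hW : W ∈ 𝒲
    · obtain ⟨_, ⟨t, -, rfl⟩, hsub⟩ := h𝒲ref W hW
      exact ⟨t, fun _ => hsub⟩
    · exact ⟨fun _ => 0, fun hmem => absurd hmem hW⟩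
  choose tW htW using hWt
  set 𝒱 : Set (Set ↥F) := ⋃ W ∈ 𝒲, (fun D => h ⁻¹' W ∩ D) '' 𝒟 (tW W) with h𝒱
  refine ⟨𝒱, ?_, ?_, ?_, ?_, ?_⟩
  · exact h𝒲fin.biUnion fun W _ => ((h𝒟fin (tW W)).image _)
  · intro V hV
    simp only [h𝒱, Set.mem_iUnion] at hV
    obtain ⟨W, hW, D, hD, rfl⟩ := hV
    exact ((h𝒲op W hW).preimage hhcont).inter (h𝒟op _ D hD)
  · apply Set.eq_univ_of_univ_subset
    intro z _
    have : h z ∈ ⋃₀ 𝒲 := h𝒲cov ▸ Set.mem_univ _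
    obtain ⟨W, hW, hzW⟩ := this
    have hzO : z ∈ h ⁻¹' (O (tW W)) := htW W hW hzW
    obtain ⟨D, hD, hzD⟩ := h𝒟cov _ hzO
    refine ⟨h ⁻¹' W ∩ D, ?_, hzW, hzD⟩
    simp only [h𝒱, Set.mem_iUnion]
    exact ⟨W, hW, ⟨D, hD, rfl⟩⟩
  · intro V hV
    simp only [h𝒱, Set.mem_iUnion] at hV
    obtain ⟨W, hW, D, hD, rfl⟩ := hV
    obtain ⟨U, hU, hDU⟩ := h𝒟ref _ D hD
    exact ⟨U, hU, Set.inter_subset_right.trans hDU⟩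
  · intro z
    have hrepex : ∀ V : Set ↥F, ∃ p : Set (ι → I) × Set ↥F, V ∈ 𝒱 →
        p.1 ∈ 𝒲 ∧ p.2 ∈ 𝒟 (tW p.1) ∧ V = h ⁻¹' p.1 ∩ p.2 := by
      intro V
      by_cases hV : V ∈ 𝒱
      · simp only [h𝒱, Set.mem_iUnion] at hV
        obtain ⟨W, hW, D, hD, rfl⟩ := hV
        exact ⟨(W, D), fun _ => ⟨hW, hD, rfl⟩⟩
      · exact ⟨(∅, ∅), fun hmem => absurd hmem hV⟩
    choose rep hrep using hrepex
    have hsub : ∀ V ∈ {V ∈ 𝒱 | z ∈ V}, (rep V).1 ∈ {W ∈ 𝒲 | h z ∈ W} := by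
      intro V hV
      obtain ⟨hW, hD, hVeq⟩ := hrep V hV.1
      refine ⟨hW, ?_⟩
      have := hV.2
      rw [hVeq] at this
      exact this.1
    have hinj : Set.InjOn (fun V => (rep V).1) {V ∈ 𝒱 | z ∈ V} := by
      intro V₁ hV₁ V₂ hV₂ heq
      have heq' : (rep V₁).1 = (rep V₂).1 := heq
      obtain ⟨hW₁, hD₁, hVeq₁⟩ := hrep V₁ hV₁.1
      obtain ⟨hW₂, hD₂, hVeq₂⟩ := hrep V₂ hV₂.1
      have hz₁ : z ∈ (rep V₁).2 := by
        have := hV₁.2; rw [hVeq₁] at this; exact this.2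
      have hz₂ : z ∈ (rep V₂).2 := by
        have := hV₂.2; rw [hVeq₂] at this; exact this.2
      have hD₁' : (rep V₁).2 ∈ 𝒟 (tW (rep V₂).1) := heq' ▸ hD₁
      have hDeq : (rep V₁).2 = (rep V₂).2 := by
        by_contra hne
        exact Set.disjoint_left.1
          (h𝒟disj _ _ hD₁' _ hD₂ hne) hz₁ hz₂
      rw [hVeq₁, hVeq₂, heq', hDeq]
    calc {V ∈ 𝒱 | z ∈ V}.ncard ≤ {W ∈ 𝒲 | h z ∈ W}.ncard :=
        Set.ncard_le_ncard_of_injOn _ hsub hinj (h𝒲fin.subset (Set.sep_subset _ _))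
      _ ≤ Fintype.card ι + 1 := h𝒲ord (h z)
      _ ≤ n + 1 := by omega
end

section
/- A topological space X has the 0-DD⁰-property (i.e., the HDD[0]{0,0}-property in the homotopical formulation) if and only if each path-connected component of X contains more than one point. -/
open unitInterval

/-- The `n`-dimensional cube `[0,1]^n`. -/
abbrev Cube (n : ℕ) : Type := Fin n → I

/-- A family of sets is an open cover of the space. -/
def IsOpenCover {X : Type} [TopologicalSpace X] (𝒰 : Set (Set X)) : Prop :=
  (∀ U ∈ 𝒰, IsOpen U) ∧ ⋃₀ 𝒰 = Set.univ

/-- Two maps are `𝒰`-homotopic: they are connected by a homotopy each of whose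
tracks lies in a single member of `𝒰`. -/
def UHomotopic {K X : Type} [TopologicalSpace K] [TopologicalSpace X]
    (𝒰 : Set (Set X)) (f g : C(K, X)) : Prop :=
  ∃ H : ContinuousMap.Homotopy f g, ∀ z : K, ∃ U ∈ 𝒰, ∀ t : I, H (t, z) ∈ U

/-- Two maps are `𝒰`-near. -/
def UNear {K X : Type} [TopologicalSpace K] [TopologicalSpace X]
    (𝒰 : Set (Set X)) (f g : C(K, X)) : Prop :=
  ∀ z : K, ∃ U ∈ 𝒰, f z ∈ U ∧ g z ∈ U

/-- `A` is a homotopical `Z_n`-set in `X`. -/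
def IsHomotopicalZSet {X : Type} [TopologicalSpace X] (A : Set X) (n : ℕ) : Prop :=
  IsClosed A ∧ ∀ 𝒰 : Set (Set X), IsOpenCover 𝒰 → ∀ f : C(Cube n, X),
    ∃ g : C(Cube n, X), (∀ z, g z ∉ A) ∧ UHomotopic 𝒰 f g

/-- `A` is a `Z_n`-set in `X`. -/
def IsZSet {X : Type} [TopologicalSpace X] (A : Set X) (n : ℕ) : Prop :=
  IsClosed A ∧ ∀ 𝒰 : Set (Set X), IsOpenCover 𝒰 → ∀ f : C(Cube n, X),
    ∃ g : C(Cube n, X), (∀ z, g z ∉ A) ∧ UNear 𝒰 f g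

/-- The `HDD^{m}_{n,k}`-property. -/
def HDD (X : Type) [TopologicalSpace X] (m n k : ℕ) : Prop :=
  ∀ 𝒰 : Set (Set X), IsOpenCover 𝒰 →
    ∀ (f : C(Cube m × Cube n, X)) (g : C(Cube m × Cube k, X)),
      ∃ (f' : C(Cube m × Cube n, X)) (g' : C(Cube m × Cube k, X)),
        UHomotopic 𝒰 f f' ∧ UHomotopic 𝒰 g g' ∧
        ∀ (z : Cube m) (s : Cube n) (t : Cube k), f' (z, s) ≠ g' (z, t)


-- key lemma: if x is joined to some z ≠ x, then for every open cover there is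
-- a member U and y ≠ x with JoinedIn U x y.
theorem aux_key {X : Type} [TopologicalSpace X] {𝒰 : Set (Set X)}
    (hop : ∀ U ∈ 𝒰, IsOpen U) (hcov : ⋃₀ 𝒰 = Set.univ)
    {x z : X} (hz : z ≠ x) (h : Joined x z) :
    ∃ U ∈ 𝒰, ∃ y, y ≠ x ∧ JoinedIn U x y := by
  obtain ⟨γ⟩ := h
  set S : Set ℝ := {t | t ∈ Set.Icc (0:ℝ) 1 ∧ ∀ s ∈ Set.Icc (0:ℝ) t, γ.extend s = x} with hS
  have h0S : (0:ℝ) ∈ S := by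
    refine ⟨⟨le_refl 0, zero_le_one⟩, ?_⟩
    intro s hs
    have : s = 0 := le_antisymm hs.2 hs.1
    simp [this]
  have hbdd : BddAbove S := ⟨1, fun t ht => ht.1.2⟩
  set c := sSup S with hc
  have hc0 : 0 ≤ c := le_csSup hbdd h0S
  have hc1 : c ≤ 1 := csSup_le ⟨0, h0S⟩ (fun t ht => ht.1.2)
  have hlt : ∀ s, 0 ≤ s → s < c → γ.extend s = x := by
    intro s hs0 hsc
    obtain ⟨t, htS, hst⟩ := exists_lt_of_lt_csSup ⟨0, h0S⟩ hsc
    exact htS.2 s ⟨hs0, hst.le⟩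
  -- helper: get U ∈ 𝒰 containing a point
  have mem_cov : ∀ p : X, ∃ U ∈ 𝒰, p ∈ U := by
    intro p
    have : p ∈ ⋃₀ 𝒰 := by rw [hcov]; trivial
    simpa using this
  by_cases hcx : γ.extend c = x
  · -- case B
    have hcne : c ≠ 1 := by
      intro h1
      rw [h1] at hcx
      simp [Path.extend_one] at hcx
      exact hz hcx
    have hclt : c < 1 := lt_of_le_of_ne hc1 hcne
    obtain ⟨U, hU𝒰, hxU⟩ := mem_cov x
    have hcont := γ.continuous_extend.continuousAt (x := c)
    have : γ.extend ⁻¹' U ∈ nhds c := hcont.preimage_mem_nhds ((hop U hU𝒰).mem_nhds (by rw [hcx]; exact hxU))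
    obtain ⟨δ, hδ, hball⟩ := Metric.mem_nhds_iff.mp this
    set b := min (c + δ/2) 1 with hb
    have hcb : c < b := lt_min (by linarith) hclt
    have hbS : b ∉ S := fun hmem => absurd (le_csSup hbdd hmem) (not_le.mpr hcb)
    have hbIcc : b ∈ Set.Icc (0:ℝ) 1 := ⟨le_trans hc0 hcb.le, min_le_right _ _⟩
    have : ∃ s ∈ Set.Icc (0:ℝ) b, γ.extend s ≠ x := by
      by_contra hcon
      push_neg at hcon
      exact hbS ⟨hbIcc, hcon⟩
    obtain ⟨s, hsI, hsx⟩ := this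
    have hcs : c < s := by
      by_contra hle
      push_neg at hle
      rcases lt_or_eq_of_le hle with h' | h'
      · exact hsx (hlt s hsI.1 h')
      · exact hsx (h' ▸ hcx)
    have hsub : Set.Icc c s ⊆ Metric.ball c δ := by
      intro u hu
      rw [Metric.mem_ball, Real.dist_eq, abs_sub_lt_iff]
      constructor
      · have : s ≤ c + δ/2 := le_trans hsI.2 (min_le_left _ _)
        linarith [hu.2]
      · linarith [hu.1]
    refine ⟨U, hU𝒰, γ.extend s, hsx, ?_⟩
    have hpath : JoinedIn U (γ.extend c) (γ.extend s) := by
      refine ⟨γ.truncateOfLE hcs.le, ?_⟩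
      intro t
      have hval : (γ.truncateOfLE hcs.le) t = γ.extend (min (max t.val c) s) := rfl
      rw [hval]
      apply hball
      apply hsub
      exact ⟨le_min (le_max_right _ _) hcs.le, min_le_right _ _⟩
    rwa [hcx] at hpath
  · -- case A
    have hcpos : 0 < c := by
      rcases lt_or_eq_of_le hc0 with h' | h'
      · exact h'
      · exfalso; apply hcx; rw [← h']; simp [Path.extend_zero]
    obtain ⟨U, hU𝒰, hcU⟩ := mem_cov (γ.extend c)
    have hcont := γ.continuous_extend.continuousAt (x := c)
    have : γ.extend ⁻¹' U ∈ nhds c := hcont.preimage_mem_nhds ((hop U hU𝒰).mem_nhds hcU)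
    obtain ⟨δ, hδ, hball⟩ := Metric.mem_nhds_iff.mp this
    set a := max (c - δ/2) 0 with ha
    have hac : a < c := max_lt (by linarith) hcpos
    have ha0 : 0 ≤ a := le_max_right _ _
    have hax : γ.extend a = x := hlt a ha0 hac
    have hsub : Set.Icc a c ⊆ Metric.ball c δ := by
      intro u hu
      rw [Metric.mem_ball, Real.dist_eq, abs_sub_lt_iff]
      constructor
      · linarith [hu.2]
      · have : c - δ/2 ≤ a := le_max_left _ _
        linarith [hu.1]
    refine ⟨U, hU𝒰, γ.extend c, hcx, ?_⟩
    have hpath : JoinedIn U (γ.extend a) (γ.extend c) := by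
      refine ⟨γ.truncateOfLE hac.le, ?_⟩
      intro t
      have hval : (γ.truncateOfLE hac.le) t = γ.extend (min (max t.val a) c) := rfl
      rw [hval]
      apply hball
      apply hsub
      exact ⟨le_min (le_max_right _ _) hac.le, min_le_right _ _⟩
    rwa [hax] at hpath

/-- A space has the `HDD[0]{0,0}`-property iff each of its path components is
non-degenerate. -/
theorem hdd000_iff_path_components_nondegenerate (X : Type) [TopologicalSpace X] :
    HDD X 0 0 0 ↔ ∀ x : X, ∃ y : X, y ≠ x ∧ Joined x y := by

  constructor
  · intro hH x
    obtain ⟨f', g', ⟨Hf, _⟩, ⟨Hg, _⟩, hne⟩ :=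
      hH {Set.univ} ⟨by simp, by simp⟩ (ContinuousMap.const _ x) (ContinuousMap.const _ x)
    set pt : Cube 0 := default with hpt
    have key : ∀ (h : C(Cube 0 × Cube 0, X)) (H : ContinuousMap.Homotopy (ContinuousMap.const _ x) h),
        Joined x (h (pt, pt)) := by
      intro h H
      exact ⟨⟨⟨fun t => H (t, (pt, pt)), by fun_prop⟩, by simp, by simp⟩⟩
    by_cases hfx : f' (pt, pt) = x
    · refine ⟨g' (pt, pt), ?_, key g' Hg⟩
      intro hgx
      exact hne pt pt pt (by rw [hfx, hgx])
    · exact ⟨f' (pt, pt), hfx, key f' Hf⟩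
  · intro hnd 𝒰 ⟨hop, hcov⟩ f g
    set pt : Cube 0 := default with hpt
    have hpts : ∀ p : Cube 0 × Cube 0, p = (pt, pt) := fun p => Subsingleton.elim _ _
    have mem_cov : ∀ p : X, ∃ U ∈ 𝒰, p ∈ U := by
      intro p
      have : p ∈ ⋃₀ 𝒰 := by rw [hcov]; trivial
      simpa using this
    have hrefl : ∀ h : C(Cube 0 × Cube 0, X), UHomotopic 𝒰 h h := by
      intro h
      refine ⟨ContinuousMap.Homotopy.refl h, fun z => ?_⟩
      obtain ⟨U, hU, hzU⟩ := mem_cov (h z)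
      exact ⟨U, hU, fun t => by simpa using hzU⟩
    by_cases hfg : f (pt, pt) = g (pt, pt)
    · set x := f (pt, pt) with hx
      obtain ⟨z, hz, hjoin⟩ := hnd x
      obtain ⟨U, hU𝒰, y, hy, ⟨p, hpU⟩⟩ := aux_key hop hcov hz hjoin
      refine ⟨f, ContinuousMap.const _ y, hrefl f, ?_, ?_⟩
      · refine ⟨⟨⟨fun q => p q.1, by fun_prop⟩, ?_, ?_⟩, ?_⟩
        · intro q
          show p 0 = g q
          rw [hpts q, ← hfg]
          exact p.source
        · intro q
          show p 1 = y
          exact p.target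
        · intro zz
          exact ⟨U, hU𝒰, fun t => hpU t⟩
      · intro zz s t
        rw [show ((zz, s) : Cube 0 × Cube 0) = (pt, pt) from Subsingleton.elim _ _]
        simp only [ContinuousMap.const_apply]
        exact fun hcon => hy hcon.symm
    · refine ⟨f, g, hrefl f, hrefl g, fun z s t => ?_⟩
      rw [show ((z, s) : Cube 0 × Cube 0) = (pt, pt) from Subsingleton.elim _ _,
          show ((z, t) : Cube 0 × Cube 0) = (pt, pt) from Subsingleton.elim _ _]
      exact hfg
end

section
/- Every ℤ-homological Z_1-set in a topological space X is a Z_1-set in X. More generally, if A is a G-homological Z_1-set for some nontrivial abelian group G, then A is a Z_1-set. -/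
open SimplexCategory

noncomputable section

open scoped NNReal in
/-- The topological simplex associated to `x : SimplexCategory`
(the definition removed from Mathlib, restored with its old meaning). -/
def SimplexCategory.toTopObj (x : SimplexCategory) : Set (Fin (x.len + 1) → ℝ≥0) :=
  { f | ∑ i, f i = 1 }

open scoped NNReal in
/-- A morphism in `SimplexCategory` induces a map on the associated topological spaces
(the definition removed from Mathlib, restored with its old meaning). -/
def SimplexCategory.toTopMap {x y : SimplexCategory} (f : x ⟶ y) (g : x.toTopObj) :
    y.toTopObj :=
  ⟨fun i => ∑ j ∈ Finset.univ.filter (fun k => f.toOrderHom k = i), g.1 j, by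
    simp only [SimplexCategory.toTopObj, Set.mem_setOf_eq]
    rw [Finset.sum_fiberwise (s := Finset.univ) (g := fun k => f.toOrderHom k) (f := g.1)]
    exact g.2⟩

theorem SimplexCategory.continuous_toTopMap {x y : SimplexCategory} (f : x ⟶ y) :
    Continuous (SimplexCategory.toTopMap f) := by
  refine Continuous.subtype_mk (continuous_pi fun i => ?_) _
  exact continuous_finset_sum _ (fun j _ => (continuous_apply j).comp continuous_subtype_val)

/-- The topological `n`-simplex. -/
abbrev TopSimplex (n : ℕ) : Type := (SimplexCategory.mk n).toTopObj

/-- The `i`-th face inclusion of topological simplices, as a continuous map. -/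
def faceMap {n : ℕ} (i : Fin (n + 2)) : C(TopSimplex n, TopSimplex (n + 1)) :=
  ⟨SimplexCategory.toTopMap (SimplexCategory.δ i), SimplexCategory.continuous_toTopMap _⟩

/-- The group of singular `n`-chains of `X` with coefficients in `G`. -/
abbrev SChain (G : Type) [AddCommGroup G] (X : Type) [TopologicalSpace X] (n : ℕ) : Type :=
  C(TopSimplex n, X) →₀ G

/-- The singular boundary operator. -/
def sBoundary {G : Type} [AddCommGroup G] {X : Type} [TopologicalSpace X] {n : ℕ}
    (c : SChain G X (n + 1)) : SChain G X n :=
  c.sum fun σ g => ∑ i : Fin (n + 2), ((-1 : ℤ) ^ (i : ℕ)) • Finsupp.single (σ.comp (faceMap i)) g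

/-- The chain map induced by a continuous map. -/
def chainMap {G : Type} [AddCommGroup G] {X Y : Type} [TopologicalSpace X] [TopologicalSpace Y]
    (φ : C(X, Y)) {n : ℕ} (c : SChain G X n) : SChain G Y n :=
  Finsupp.mapDomain (fun σ => φ.comp σ) c

/-- The continuous inclusion of one subspace into a larger one. -/
def inclCM {X : Type} [TopologicalSpace X] {B U : Set X} (h : B ⊆ U) : C(B, U) :=
  ⟨Set.inclusion h, continuous_inclusion h⟩

/-- `ZeroRelHomology G U B h k` says that the relative singular homology group
`H_k(U, B; G)` of the pair of subspaces `B ⊆ U` is trivial: every relative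
`k`-cycle is a relative `k`-boundary. -/
def ZeroRelHomology (G : Type) [AddCommGroup G] {X : Type} [TopologicalSpace X]
    (U B : Set X) (h : B ⊆ U) : ℕ → Prop
  | 0 => ∀ c : SChain G U 0, ∃ (c' : SChain G U 1) (d : SChain G B 0),
      c = sBoundary c' + chainMap (inclCM h) d
  | (k + 1) => ∀ c : SChain G U (k + 1),
      (∃ e : SChain G B k, sBoundary c = chainMap (inclCM h) e) →
      ∃ (c' : SChain G U (k + 2)) (d : SChain G B (k + 1)),
        c = sBoundary c' + chainMap (inclCM h) d

/-- `A` is a `G`-homological `Z_n`-set in `X`. -/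
def IsGHomologicalZSet (G : Type) [AddCommGroup G] {X : Type} [TopologicalSpace X]
    (A : Set X) (n : ℕ) : Prop :=
  IsClosed A ∧ ∀ U : Set X, IsOpen U → ∀ k ≤ n,
    ZeroRelHomology G U (U \ A) Set.diff_subset k

open unitInterval

/-!
A nonzero coefficient `g` lets `0`-chains detect path components. If `H₀(U, U \ A; G) = 0`, the
point `g • x` is homologous to a chain in `U \ A`, so every point of `U` is joined in `U` to a point
of `U \ A`. If `H₁(U, U \ A; G) = 0`, a path in `U` between two points of `U \ A` is a relative
`1`-cycle, hence a relative boundary; taking boundaries once more shows that `g • y - g • x` is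
a boundary in `U \ A`, so the two points are joined in `U \ A`.

Given a path `f` and an open cover, subdivide `[0, 1]` into `N` equal pieces, the `n`-th mapped
into a member `W n`. Push the image of each vertex off `A` inside the intersection of the members
of the two adjacent pieces, join consecutive pushed vertices inside `W n \ A`, and concatenate.
-/

open scoped NNReal
open CategoryTheory

namespace SimplexCategory

lemma toTopMap_comp {x y z : SimplexCategory} (f : x ⟶ y) (g : y ⟶ z) (a : x.toTopObj) :
    toTopMap (f ≫ g) a = toTopMap g (toTopMap f a) := by
  apply Subtype.ext
  funext k
  simp only [toTopMap, comp_toOrderHom, OrderHom.comp_coe, Function.comp_apply]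
  have hmaps : ∀ j ∈ Finset.univ.filter (fun j => g.toOrderHom (f.toOrderHom j) = k),
      f.toOrderHom j ∈ Finset.univ.filter (fun i => g.toOrderHom i = k) := by
    intro j hj
    simpa using hj
  rw [← Finset.sum_fiberwise_of_maps_to hmaps]
  refine Finset.sum_congr rfl fun i hi => Finset.sum_congr ?_ fun _ _ => rfl
  ext j
  simp only [Finset.mem_filter, Finset.mem_univ, true_and] at hi ⊢
  exact ⟨fun h => h.2, fun h => ⟨h ▸ hi, h⟩⟩

end SimplexCategory

namespace TopSimplex

def vertex {n : ℕ} (k : Fin (n + 1)) : TopSimplex n :=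
  ⟨Pi.single k 1, by simp [SimplexCategory.toTopObj]⟩

instance : Unique (TopSimplex 0) where
  default := vertex 0
  uniq a := by
    apply Subtype.ext
    funext i
    obtain rfl : i = 0 := Subsingleton.elim (α := Fin 1) i 0
    have ha : ∑ j : Fin 1, (a : Fin 1 → ℝ≥0) j = 1 := a.2
    simpa [vertex] using ha

lemma eq_vertex_zero (a : TopSimplex 0) : a = vertex 0 :=
  Unique.eq_default a

instance (n : ℕ) : PathConnectedSpace (TopSimplex n) where
  nonempty := ⟨vertex 0⟩
  joined a b := ⟨{
    toFun t := ⟨fun i => toNNReal (σ t) * (a : Fin (n + 1) → ℝ≥0) i +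
        toNNReal t * (b : Fin (n + 1) → ℝ≥0) i, by
      have ha : ∑ i, (a : Fin (n + 1) → ℝ≥0) i = 1 := a.2
      have hb : ∑ i, (b : Fin (n + 1) → ℝ≥0) i = 1 := b.2
      change ∑ i, _ = 1
      rw [Finset.sum_add_distrib, ← Finset.mul_sum, ← Finset.mul_sum, ha, hb, mul_one, mul_one,
        toNNReal_symm_add_toNNReal]⟩
    continuous_toFun := by fun_prop
    source' := by ext; simp
    target' := by ext; simp }⟩

def lastCoord : C(TopSimplex 1, I) where
  toFun a := ⟨(a : Fin 2 → ℝ≥0) 1, ((a : Fin 2 → ℝ≥0) 1).2, by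
    have ha : ∑ i, (a : Fin 2 → ℝ≥0) i = 1 := a.2
    rw [Fin.sum_univ_two] at ha
    exact_mod_cast ha ▸ le_add_self⟩
  continuous_toFun := by
    refine Continuous.subtype_mk ?_ _
    exact NNReal.continuous_coe.comp ((continuous_apply 1).comp continuous_subtype_val)

lemma lastCoord_vertex (k : Fin 2) : lastCoord (vertex k) = if k = 1 then 1 else 0 := by
  fin_cases k <;> ext <;> simp [lastCoord, vertex]

end TopSimplex

open TopSimplex

lemma faceMap_vertex {n : ℕ} (i : Fin (n + 2)) (k : Fin (n + 1)) :
    faceMap i (vertex k) = vertex (i.succAbove k) := by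
  apply Subtype.ext
  funext j
  simp only [faceMap, ContinuousMap.coe_mk, SimplexCategory.toTopMap, vertex]
  rw [Finset.sum_filter, Finset.sum_eq_single k]
  · simp [Pi.single_apply, eq_comm, SimplexCategory.δ]
  · intro l _ hl
    simp [hl]
  · simp

lemma faceMap_comp_faceMap {n : ℕ} {i j : Fin (n + 2)} (H : i ≤ j) :
    (faceMap j.succ).comp (faceMap i) = (faceMap i.castSucc).comp (faceMap j) := by
  ext1 a
  simp only [faceMap, ContinuousMap.comp_apply, ContinuousMap.coe_mk,
    ← SimplexCategory.toTopMap_comp, SimplexCategory.δ_comp_δ H]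

section Chains

variable {G : Type} [AddCommGroup G] {Y Z : Type} [TopologicalSpace Y] [TopologicalSpace Z]

lemma sBoundary_add {n : ℕ} (a b : SChain G Y (n + 1)) :
    sBoundary (a + b) = sBoundary a + sBoundary b :=
  Finsupp.sum_add_index' (by simp) (by simp [Finsupp.single_add, Finset.sum_add_distrib])

variable (G Y) in
def sBoundaryHom (n : ℕ) : SChain G Y (n + 1) →+ SChain G Y n where
  toFun := sBoundary
  map_zero' := Finsupp.sum_zero_index
  map_add' := sBoundary_add

lemma sBoundaryHom_apply {n : ℕ} (c : SChain G Y (n + 1)) : sBoundaryHom G Y n c = sBoundary c :=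
  rfl

lemma sBoundary_single {n : ℕ} (s : C(TopSimplex (n + 1), Y)) (g : G) :
    sBoundary (Finsupp.single s g) =
      ∑ i : Fin (n + 2), ((-1 : ℤ) ^ (i : ℕ)) • Finsupp.single (s.comp (faceMap i)) g :=
  Finsupp.sum_single_index (by simp)

lemma sBoundary_single_one (s : C(TopSimplex 1, Y)) (g : G) :
    sBoundary (Finsupp.single s g) =
      Finsupp.single (s.comp (faceMap 0)) g - Finsupp.single (s.comp (faceMap 1)) g := by
  simp [sBoundary_single, Fin.sum_univ_two, sub_eq_add_neg]

lemma sBoundary_sBoundary (c : SChain G Y 2) : sBoundary (sBoundary c) = 0 := by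
  induction c using Finsupp.induction_linear with
  | zero => simp [← sBoundaryHom_apply]
  | add a b ha hb => rw [sBoundary_add, sBoundary_add, ha, hb, add_zero]
  | single s g =>
    have h₀₀ := faceMap_comp_faceMap (n := 0) (i := 0) (j := 0) le_rfl
    have h₀₁ := faceMap_comp_faceMap (n := 0) (i := 0) (j := 1) zero_le_one
    have h₁₁ := faceMap_comp_faceMap (n := 0) (i := 1) (j := 1) le_rfl
    simp only [Fin.succ_zero_eq_one, Fin.succ_one_eq_two, Fin.castSucc_zero, Fin.castSucc_one]
      at h₀₀ h₀₁ h₁₁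
    rw [sBoundary_single, Fin.sum_univ_three, ← sBoundaryHom_apply]
    simp only [map_add, map_zsmul, sBoundaryHom_apply, sBoundary_single_one,
      ContinuousMap.comp_assoc, h₀₀, h₀₁, h₁₁]
    simp

lemma chainMap_sBoundary (φ : C(Y, Z)) {n : ℕ} (c : SChain G Y (n + 1)) :
    sBoundary (chainMap φ c) = chainMap φ (sBoundary c) := by
  induction c using Finsupp.induction_linear with
  | zero => simp [chainMap, ← sBoundaryHom_apply]
  | add a b ha hb =>
    simp only [chainMap, Finsupp.mapDomain_add, sBoundary_add] at ha hb ⊢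
    rw [ha, hb]
  | single s g =>
    simp [chainMap, sBoundary_single, Finsupp.mapDomain_finsetSum, ContinuousMap.comp_assoc]

lemma chainMap_injective {φ : C(Y, Z)} (hφ : Function.Injective φ) (n : ℕ) :
    Function.Injective (chainMap (G := G) φ (n := n)) :=
  Finsupp.mapDomain_injective fun _ _ h => ContinuousMap.ext fun a => hφ (DFunLike.congr_fun h a)

end Chains

lemma ZerothHomotopy.mk_eq_mk_iff {Y : Type} [TopologicalSpace Y] {x y : Y} :
    ZerothHomotopy.mk x = ZerothHomotopy.mk y ↔ Joined x y :=
  ⟨Quotient.exact, fun h => ZerothHomotopy.sound h.somePath⟩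

section ZerothHomology

variable {G : Type} [AddCommGroup G] {Y : Type} [TopologicalSpace Y]

def zerothClass (s : C(TopSimplex 0, Y)) : ZerothHomotopy Y :=
  .mk (s default)

@[simp]
lemma zerothClass_const (y : Y) : zerothClass (ContinuousMap.const (TopSimplex 0) y) = .mk y :=
  rfl

lemma mapDomain_zerothClass_sBoundary (c : SChain G Y 1) :
    Finsupp.mapDomain zerothClass (sBoundary c) = 0 := by
  induction c using Finsupp.induction_linear with
  | zero => simp [← sBoundaryHom_apply]
  | add a b ha hb => rw [sBoundary_add, Finsupp.mapDomain_add, ha, hb, add_zero]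
  | single s g =>
    have hfaces : zerothClass (s.comp (faceMap 0)) = zerothClass (s.comp (faceMap 1)) :=
      ZerothHomotopy.sound ((PathConnectedSpace.joined _ _).somePath.map s.continuous)
    rw [sBoundary_single_one, Finsupp.mapDomain_sub, Finsupp.mapDomain_single,
      Finsupp.mapDomain_single, hfaces, sub_self]

end ZerothHomology

section RelativeHomology

variable {G : Type} [AddCommGroup G] [Nontrivial G] {X : Type} [TopologicalSpace X] {U B : Set X}

theorem exists_mem_joinedIn_of_zeroRelHomology_zero {hBU : B ⊆ U}
    (h : ZeroRelHomology G U B hBU 0) {x : X} (hx : x ∈ U) : ∃ y ∈ B, JoinedIn U x y := by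
  classical
  obtain ⟨g, hg⟩ := exists_ne (0 : G)
  obtain ⟨c, d, hcd⟩ := h (Finsupp.single (ContinuousMap.const _ ⟨x, hx⟩) g)
  have hclass : Finsupp.single (ZerothHomotopy.mk (⟨x, hx⟩ : U)) g =
      Finsupp.mapDomain (zerothClass ∘ fun s => (inclCM hBU).comp s) d := by
    have := congrArg (Finsupp.mapDomain zerothClass) hcd
    simpa only [Finsupp.mapDomain_add, mapDomain_zerothClass_sBoundary, zero_add,
      Finsupp.mapDomain_single, zerothClass_const, chainMap, ← Finsupp.mapDomain_comp] using this
  have hmem : ZerothHomotopy.mk (⟨x, hx⟩ : U) ∈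
      (Finsupp.mapDomain (zerothClass ∘ fun s => (inclCM hBU).comp s) d).support := by
    simp [← hclass, hg]
  obtain ⟨s, -, hs⟩ := Finset.mem_image.mp (Finsupp.mapDomain_support hmem)
  refine ⟨s default, (s default).2, ?_⟩
  rw [joinedIn_iff_joined hx (hBU (s default).2)]
  exact (ZerothHomotopy.mk_eq_mk_iff.mp hs).symm

theorem joinedIn_of_zeroRelHomology_one {hBU : B ⊆ U}
    (h : ZeroRelHomology G U B hBU 1) {x y : X} (hx : x ∈ B) (hy : y ∈ B) (hxy : JoinedIn U x y) :
    JoinedIn B x y := by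
  obtain ⟨g, hg⟩ := exists_ne (0 : G)
  rw [joinedIn_iff_joined (hBU hx) (hBU hy)] at hxy
  let s : C(TopSimplex 1, U) := hxy.somePath.toContinuousMap.comp lastCoord
  have hface₀ : s.comp (faceMap 0) = ContinuousMap.const _ ⟨y, hBU hy⟩ := by
    ext1 a
    simp [s, eq_vertex_zero a, faceMap_vertex, lastCoord_vertex]
  have hface₁ : s.comp (faceMap 1) = ContinuousMap.const _ ⟨x, hBU hx⟩ := by
    ext1 a
    simp [s, eq_vertex_zero a, faceMap_vertex, lastCoord_vertex]
  let e : SChain G B 0 := Finsupp.single (ContinuousMap.const _ ⟨y, hy⟩) g -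
    Finsupp.single (ContinuousMap.const _ ⟨x, hx⟩) g
  have he : sBoundary (Finsupp.single s g) = chainMap (inclCM hBU) e := by
    simp only [e, sBoundary_single_one, hface₀, hface₁, chainMap, Finsupp.mapDomain_sub,
      Finsupp.mapDomain_single]
    rfl
  obtain ⟨c, d, hcd⟩ := h (Finsupp.single s g) ⟨e, he⟩
  have hed : e = sBoundary d := by
    apply chainMap_injective (φ := inclCM hBU) (Set.inclusion_injective hBU)
    rw [← he, hcd, sBoundary_add, sBoundary_sBoundary, zero_add, chainMap_sBoundary]
  have hclass := mapDomain_zerothClass_sBoundary (G := G) d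
  rw [← hed, Finsupp.mapDomain_sub, Finsupp.mapDomain_single, Finsupp.mapDomain_single,
    sub_eq_zero, Finsupp.single_left_inj hg] at hclass
  rw [joinedIn_iff_joined hx hy]
  exact (ZerothHomotopy.mk_eq_mk_iff.mp hclass).symm

end RelativeHomology

section PathApproximation

open Set

variable {X : Type} [TopologicalSpace X]

lemma exists_uniform_subdivision_subordinate (f : C(I, X)) {𝒰 : Set (Set X)}
    (h𝒰 : IsOpenCover 𝒰) :
    ∃ N : ℕ, 0 < N ∧
      ∀ n : ℕ, ∃ W ∈ 𝒰, ∀ s : I, (n : ℝ) ≤ N * s → (N : ℝ) * s ≤ n + 1 → f s ∈ W := by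
  obtain ⟨δ, hδ, hball⟩ := lebesgue_number_lemma_of_metric (c := fun W : 𝒰 => f ⁻¹' W)
    isCompact_univ (fun W => (h𝒰.1 W W.2).preimage f.continuous) fun s _ => by
      obtain ⟨W, hW, hsW⟩ := sUnion_eq_univ_iff.mp h𝒰.2 (f s)
      exact mem_iUnion.mpr ⟨⟨W, hW⟩, hsW⟩
  obtain ⟨N, hN⟩ := exists_nat_one_div_lt hδ
  refine ⟨N + 1, N.succ_pos, fun n => ?_⟩
  obtain ⟨⟨W, hW⟩, hsub⟩ := hball (projIcc 0 1 zero_le_one (n / (N + 1))) trivial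
  refine ⟨W, hW, fun s h₁ h₂ => hsub ?_⟩
  have hN₀ : (0 : ℝ) < N + 1 := N.cast_add_one_pos
  push_cast at h₁ h₂
  have hs : |(s : ℝ) - n / (N + 1)| ≤ 1 / (N + 1) := by
    have hdiff : (s : ℝ) - n / (N + 1) = ((N + 1) * s - n) / (N + 1) := by field_simp
    rw [hdiff, abs_div, abs_of_pos hN₀, div_le_div_iff_of_pos_right hN₀, abs_le]
    constructor <;> linarith
  rw [Metric.mem_ball, Subtype.dist_eq, Real.dist_eq, ← projIcc_val zero_le_one s]
  exact (abs_projIcc_sub_projIcc zero_le_one).trans_lt (hs.trans_lt hN)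

lemma ContinuousMap.exists_glue_le {Y : Type} [TopologicalSpace Y] (τ : C(Y, ℝ)) (c : ℝ)
    (g h : C(Y, X)) (hgh : ∀ y, τ y = c → g y = h y) :
    ∃ k : C(Y, X), (∀ y, τ y ≤ c → k y = g y) ∧ ∀ y, c ≤ τ y → k y = h y := by
  classical
  refine ⟨⟨fun y => if τ y ≤ c then g y else h y,
    g.continuous.if_le h.continuous τ.continuous continuous_const hgh⟩, fun y hy => if_pos hy,
    fun y hy => ?_⟩
  by_cases hy' : τ y ≤ c
  · simp [hy', hgh y (le_antisymm hy' hy)]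
  · simp [hy']

lemma joinedIn_of_forall_mem_Icc (f : C(I, X)) {a b : ℝ} (ha : 0 ≤ a) (hab : a ≤ b) (hb : b ≤ 1)
    {W : Set X} (hW : ∀ s : I, a ≤ s → (s : ℝ) ≤ b → f s ∈ W) :
    JoinedIn W (f (projIcc 0 1 zero_le_one a)) (f (projIcc 0 1 zero_le_one b)) := by
  have hseg := ((convex_Icc a b).isPathConnected (nonempty_Icc.2 hab)).joinedIn a
    (left_mem_Icc.2 hab) b (right_mem_Icc.2 hab)
  refine (hseg.map (f.continuous.comp continuous_projIcc)).mono ?_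
  rintro _ ⟨r, hr, rfl⟩
  have hr01 : r ∈ Icc (0 : ℝ) 1 := ⟨ha.trans hr.1, hr.2.trans hb⟩
  have hr' : ((projIcc 0 1 zero_le_one r : I) : ℝ) = r := by simp [projIcc_of_mem _ hr01]
  exact hW _ (hr'.symm ▸ hr.1) (hr'.symm ▸ hr.2)

lemma exists_approx_of_joinedIn_chain {A : Set X} (f : C(I, X)) {N : ℕ} (hN : 0 < N)
    {W : ℕ → Set X}
    (hfW : ∀ (n : ℕ) (s : I), (n : ℝ) ≤ N * s → (N : ℝ) * s ≤ n + 1 → f s ∈ W n)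
    {y : ℕ → X} (hy : ∀ n < N, JoinedIn (W n \ A) (y n) (y (n + 1))) :
    ∃ g : C(I, X), ∀ s, ∃ n, f s ∈ W n ∧ g s ∈ W n \ A := by
  have key : ∀ n ≤ N, ∃ g : C(I, X), (∀ s : I, (N : ℝ) * s = n → g s = y n) ∧
      ∀ s : I, (N : ℝ) * s ≤ n → ∃ m, f s ∈ W m ∧ g s ∈ W m \ A := by
    intro n
    induction n with
    | zero =>
      intro _
      refine ⟨ContinuousMap.const _ (y 0), fun _ _ => rfl, fun s hs => ⟨0, hfW 0 s ?_ ?_, ?_⟩⟩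
      · have := s.2.1; push_cast; positivity
      · push_cast at hs ⊢; linarith
      · exact (hy 0 hN).mem.1
    | succ n ih =>
      intro hn
      obtain ⟨g, hg_end, hg⟩ := ih (by omega)
      obtain ⟨γ, hγ⟩ := hy n (by omega)
      let τ : C(I, ℝ) := ⟨fun s => N * s, by fun_prop⟩
      let p : C(I, X) :=
        γ.toContinuousMap.comp ⟨fun s => projIcc 0 1 zero_le_one (N * s - n), by fun_prop⟩
      obtain ⟨g', hg'g, hg'p⟩ := ContinuousMap.exists_glue_le τ n g p fun s hs => by
        change (N : ℝ) * s = n at hs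
        simp [p, hg_end s hs, hs]
      refine ⟨g', fun s hs => ?_, fun s hs => ?_⟩
      · rw [hg'p s (by simp [τ, hs])]
        simp [p, hs]
      · rcases le_total (N * s : ℝ) n with hle | hge
        · rw [hg'g s hle]
          exact hg s hle
        · refine ⟨n, hfW n s hge (by exact_mod_cast hs), ?_⟩
          rw [hg'p s hge]
          exact hγ _
  obtain ⟨g, -, hg⟩ := key N le_rfl
  exact ⟨g, fun s => hg s (mul_le_of_le_one_right N.cast_nonneg s.2.2)⟩

lemma exists_joinedIn_chain {A : Set X}
    (hpush : ∀ U, IsOpen U → ∀ x ∈ U, ∃ y ∈ U \ A, JoinedIn U x y)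
    (hjoin : ∀ U, IsOpen U → ∀ x ∈ U \ A, ∀ y ∈ U \ A, JoinedIn U x y → JoinedIn (U \ A) x y)
    (f : C(I, X)) {N : ℕ} (hN : 0 < N) {W : ℕ → Set X} (hWo : ∀ n, IsOpen (W n))
    (hfW : ∀ (n : ℕ) (s : I), (n : ℝ) ≤ N * s → (N : ℝ) * s ≤ n + 1 → f s ∈ W n) :
    ∃ y : ℕ → X, ∀ n < N, JoinedIn (W n \ A) (y n) (y (n + 1)) := by
  have hN₀ : (0 : ℝ) < N := Nat.cast_pos.2 hN
  let v : ℕ → I := fun n => projIcc 0 1 zero_le_one (n / N)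
  have hv : ∀ n ≤ N, (N : ℝ) * v n = n := fun n hn => by
    simp only [v]
    rw [projIcc_of_mem _ ⟨by positivity, div_le_one_of_le₀ (Nat.cast_le.2 hn) hN₀.le⟩]
    field_simp
  -- `n - 1` truncates, so the neighbourhood of the first vertex is `W 0`.
  have hfv : ∀ n ≤ N, f (v n) ∈ W (n - 1) ∩ W n := fun n hn => by
    refine ⟨hfW _ _ ?_ ?_, hfW _ _ (hv n hn).ge (by linarith [hv n hn])⟩ <;>
      rcases n with _ | n <;> simp [hv _ hn]
  have hvertex : ∀ n, ∃ y, n ≤ N →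
      y ∈ (W (n - 1) ∩ W n) \ A ∧ JoinedIn (W (n - 1) ∩ W n) (f (v n)) y := by
    intro n
    by_cases hn : n ≤ N
    · obtain ⟨y, hy, hJ⟩ := hpush _ ((hWo _).inter (hWo _)) _ (hfv n hn)
      exact ⟨y, fun _ => ⟨hy, hJ⟩⟩
    · exact ⟨f 0, fun h => absurd h hn⟩
  choose y hy using hvertex
  refine ⟨y, fun n hn => ?_⟩
  obtain ⟨⟨⟨-, hyn⟩, hynA⟩, hJn⟩ := hy n hn.le
  obtain ⟨⟨⟨hyn', -⟩, hynA'⟩, hJn'⟩ := hy (n + 1) hn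
  refine hjoin _ (hWo n) _ ⟨hyn, hynA⟩ _ ⟨hyn', hynA'⟩ ?_
  have hseg : JoinedIn (W n) (f (v n)) (f (v (n + 1))) := by
    refine joinedIn_of_forall_mem_Icc f (by positivity) ?_ ?_ fun s h₁ h₂ => hfW n s ?_ ?_
    · gcongr; simp
    · exact div_le_one_of_le₀ (Nat.cast_le.2 hn) hN₀.le
    · rwa [div_le_iff₀' hN₀] at h₁
    · rwa [le_div_iff₀' hN₀, Nat.cast_succ] at h₂
  exact ((hJn.symm.mono inter_subset_right).trans hseg).trans (hJn'.mono inter_subset_left)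

theorem exists_near_avoiding_of_joinedIn {A : Set X}
    (hpush : ∀ U, IsOpen U → ∀ x ∈ U, ∃ y ∈ U \ A, JoinedIn U x y)
    (hjoin : ∀ U, IsOpen U → ∀ x ∈ U \ A, ∀ y ∈ U \ A, JoinedIn U x y → JoinedIn (U \ A) x y)
    {𝒰 : Set (Set X)} (h𝒰 : IsOpenCover 𝒰) (f : C(I, X)) :
    ∃ g : C(I, X), (∀ s, g s ∉ A) ∧ UNear 𝒰 f g := by
  obtain ⟨N, hN, hW⟩ := exists_uniform_subdivision_subordinate f h𝒰
  choose W hW𝒰 hfW using hW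
  obtain ⟨y, hy⟩ := exists_joinedIn_chain hpush hjoin f hN (fun n => h𝒰.1 _ (hW𝒰 n)) hfW
  obtain ⟨g, hg⟩ := exists_approx_of_joinedIn_chain f hN hfW hy
  refine ⟨g, fun s => ?_, fun s => ?_⟩
  · obtain ⟨n, -, -, hgA⟩ := hg s
    exact hgA
  · obtain ⟨n, hf, hgW, -⟩ := hg s
    exact ⟨W n, hW𝒰 n, hf, hgW⟩

end PathApproximation

theorem IsGHomologicalZSet.isZSet_one {G : Type} [AddCommGroup G] [Nontrivial G] {X : Type}
    [TopologicalSpace X] {A : Set X} (h : IsGHomologicalZSet G A 1) : IsZSet A 1 := by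
  obtain ⟨hA, hU⟩ := h
  refine ⟨hA, fun 𝒰 h𝒰 f => ?_⟩
  let e : Cube 1 ≃ₜ I := Homeomorph.funUnique (Fin 1) I
  obtain ⟨g, hgA, hfg⟩ := exists_near_avoiding_of_joinedIn (A := A)
    (fun U hU' _ hx => exists_mem_joinedIn_of_zeroRelHomology_zero (hU U hU' 0 zero_le_one) hx)
    (fun U hU' _ hx _ hy => joinedIn_of_zeroRelHomology_one (G := G) (hU U hU' 1 le_rfl) hx hy)
    h𝒰 (f.comp e.symm)
  refine ⟨g.comp e, fun z => hgA (e z), fun z => ?_⟩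
  simpa using hfg (e z)

/-- Every `ℤ`-homological `Z_1`-set is a `Z_1`-set; more generally every
`G`-homological `Z_1`-set for a nontrivial abelian group `G` is a `Z_1`-set. -/
theorem isZSet_one_of_homologicalZSet {X : Type} [TopologicalSpace X] (A : Set X) :
    (IsGHomologicalZSet ℤ A 1 → IsZSet A 1) ∧
    (∀ (G : Type) (_ : AddCommGroup G), Nontrivial G →
      IsGHomologicalZSet G A 1 → IsZSet A 1) :=
  ⟨IsGHomologicalZSet.isZSet_one, fun _ _ _ h => h.isZSet_one⟩
end
end
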